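/- arXiv:math/0512015 — 6 statements merged into one kernel-verified Lean document; each statement's English description precedes it below -/
import Mathlib

section
/- Let p be an odd prime, n ≥ 0, ζ a primitive p^(n+1)-th root of unity in ℚ_p-bar, π = ζ - 1, and Δ = (Z/pZ)^×. Let χ: Δ → ℚ_p-bar^× be a character with χ ≠ ω^(-1), where ω is the Teichmüller character. Then the idempotent projection e_χ(1/π) = (1/(p-1)) Σ_{σ∈Δ} χ̄(σ) σ(1/π) lies in the ring of integers Z_p[ζ]. -/
/-!
Write `π = ζ - 1` and `σ_a(ζ) = ζ ^ m_a`. As `m_a m_{a⁻¹} ≡ 1 [MOD p ^ (n + 1)]`, the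
geometric sum `w_a = ∑_{i < m_{a⁻¹}} ζ ^ (m_a i)` satisfies `σ_a(π) w_a = π`, so
`σ_a(1/π) = w_a / π`. Modulo `π` we have `ζ ≡ 1` and `p ≡ 0`, hence `w_a ≡ m_{a⁻¹} ≡ ω(a)⁻¹`.
The values of `χ` are `(p-1)`-th roots of unity, and these are all Teichmüller values, so
`χ = ω ∘ τ` for an endomorphism `τ` of `Δ`. Then `∑_a χ(a)⁻¹ w_a ≡ ∑_a (χ ω)(a)⁻¹ = 0` by
orthogonality, since `χ ω ≠ 1`: the numerator of `e_χ(1/π)` is divisible by `π`, and `p - 1`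
is a unit of `ℤ_p`.
-/

open Finset

namespace PadicInt

variable {p : ℕ} [Fact p.Prime]

theorem algebraMap_injective {K : Type*} [Ring K] [IsDomain K] [CharZero K] [Algebra ℤ_[p] K] :
    Function.Injective (algebraMap ℤ_[p] K) := by
  refine (injective_iff_map_eq_zero _).2 fun x hx => ?_
  by_contra hx0
  obtain ⟨k, hk⟩ := ideal_eq_span_pow_p (s := RingHom.ker (algebraMap ℤ_[p] K))
    fun h => hx0 (by rwa [← RingHom.mem_ker, h, Ideal.mem_bot] at hx)
  have hpk : (p : ℤ_[p]) ^ k ∈ RingHom.ker (algebraMap ℤ_[p] K) :=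
    hk ▸ Ideal.mem_span_singleton_self _
  rw [RingHom.mem_ker, map_pow, map_natCast] at hpk
  exact pow_ne_zero k (Nat.cast_ne_zero.2 (Fact.out : p.Prime).ne_zero) hpk

theorem isUnit_natCast_sub_one : IsUnit ((p : ℤ_[p]) - 1) := by
  simpa using (IsLocalRing.isUnit_one_sub_self_of_mem_nonunits _
    (mem_nonunits_iff.2 irreducible_p.not_isUnit)).neg

theorem inv_natCast_sub_one_mem {K : Type*} [Field K] [Algebra ℤ_[p] K]
    (R : Subalgebra ℤ_[p] K) :
    ((p : K) - 1)⁻¹ ∈ R := by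
  obtain ⟨u, hu⟩ := isUnit_natCast_sub_one (p := p)
  have hinv : ((p : K) - 1)⁻¹ = algebraMap ℤ_[p] K ↑u⁻¹ := by
    simp [hu]
  exact hinv ▸ R.algebraMap_mem _

theorem dvd_algebraMap_sub_of_toZMod_eq {A : Type*} [CommRing A] [Algebra ℤ_[p] A] {π : A}
    (hπ : π ∣ (p : A)) {u w : ℤ_[p]} (h : toZMod u = toZMod w) :
    π ∣ algebraMap ℤ_[p] A u - algebraMap ℤ_[p] A w := by
  have hmem : u - w ∈ IsLocalRing.maximalIdeal ℤ_[p] := by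
    rw [← ker_toZMod, RingHom.mem_ker, map_sub, h, sub_self]
  rw [maximalIdeal_eq_span_p, Ideal.mem_span_singleton] at hmem
  rw [← map_sub]
  exact hπ.trans (by simpa using map_dvd (algebraMap ℤ_[p] A) hmem)

end PadicInt

theorem MonoidHom.exists_eq_comp_of_injective {G K : Type*} [Group G] [Finite G] [CommRing K]
    [IsDomain K] {f : G →* Kˣ} (hf : Function.Injective f) (χ : G →* Kˣ) :
    ∃ τ : G →* G, χ = f.comp τ := by
  have hle : ∀ {φ : G →* Kˣ}, φ.range ≤ rootsOfUnity (Nat.card G) K := by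
    rintro φ _ ⟨g, rfl⟩
    rw [mem_rootsOfUnity, ← map_pow, pow_card_eq_one', map_one]
  have hrange : f.range = rootsOfUnity (Nat.card G) K := by
    refine Subgroup.eq_of_le_of_card_ge hle ?_
    rw [Nat.card_congr (MonoidHom.ofInjective hf).toEquiv.symm]
    exact card_rootsOfUnity K (Nat.card G)
  refine ⟨(MonoidHom.ofInjective hf).symm.toMonoidHom.comp
    (χ.codRestrict f.range fun g => hrange ▸ hle ⟨g, rfl⟩), ?_⟩
  ext g
  simp [MonoidHom.apply_ofInjective_symm]

theorem sum_units_mul_eq_zero {G R : Type*} [Group G] [Fintype G] [CommRing R] [IsDomain R]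
    {χ ψ : G →* Rˣ} (h : χ ≠ ψ⁻¹) : ∑ g, (χ g : R) * ψ g = 0 := by
  refine Eq.trans (by simp)
    (sum_hom_units_eq_zero ((Units.coeHom R).comp (χ * ψ)) fun h1 => h ?_)
  ext g
  exact congrArg Units.val
    (eq_inv_of_mul_eq_one_left (Units.ext (DFunLike.congr_fun h1 g)))

theorem inv_pow_sub_one_eq {K : Type*} [Field K] {ζ : K} {m m' : ℕ} (hζ : ζ ≠ 1)
    (h : ζ ^ (m * m') = ζ) :
    (ζ ^ m - 1)⁻¹ = (ζ - 1)⁻¹ * ∑ i ∈ range m', (ζ ^ m) ^ i := by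
  have hmul : (ζ ^ m - 1) * ∑ i ∈ range m', (ζ ^ m) ^ i = ζ - 1 := by
    rw [mul_geom_sum, ← pow_mul, h]
  have hw : ∑ i ∈ range m', (ζ ^ m) ^ i ≠ 0 :=
    right_ne_zero_of_mul (hmul ▸ sub_ne_zero.2 hζ)
  rw [← hmul, mul_inv, inv_mul_cancel_right₀ hw]

namespace IsPrimitiveRoot

theorem pow_val_mul_val {M : Type*} [CommMonoid M] {ζ : M} {N : ℕ} [NeZero N]
    (hζ : IsPrimitiveRoot ζ N) {a b : ZMod N} (hab : a * b = 1) : ζ ^ (a.val * b.val) = ζ := by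
  rw [← pow_mod_orderOf, ← hζ.eq_orderOf, ← ZMod.val_mul, hab, ZMod.val_one_eq_one_mod,
    hζ.eq_orderOf, pow_mod_orderOf, pow_one]

variable {p n : ℕ} [Fact p.Prime] {A : Type*} [CommRing A] [IsDomain A] {z : A}

theorem sub_one_dvd_prime (hz : IsPrimitiveRoot z (p ^ (n + 1))) : z - 1 ∣ (p : A) := by
  have hξ : IsPrimitiveRoot (z ^ p ^ n) p :=
    hz.pow (pow_pos (Fact.out : p.Prime).pos _) (pow_succ p n)
  simpa using (sub_dvd_pow_sub_pow z 1 (p ^ n)).trans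
    (by simpa using hξ.sub_one_dvd_natCast (Fact.out : p.Prime).one_lt)

variable [Algebra ℤ_[p] A]

theorem sub_one_dvd_geom_sum_sub_algebraMap (hz : IsPrimitiveRoot z (p ^ (n + 1))) (m k : ℕ)
    {u : ℤ_[p]} (hu : PadicInt.toZMod u = k) :
    z - 1 ∣ ∑ i ∈ range k, (z ^ m) ^ i - algebraMap ℤ_[p] A u := by
  have hgeom : z - 1 ∣ ∑ i ∈ range k, ((z ^ m) ^ i - 1) :=
    dvd_sum fun i _ => by simpa [← pow_mul] using sub_dvd_pow_sub_pow z 1 (m * i)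
  have hcast := PadicInt.dvd_algebraMap_sub_of_toZMod_eq hz.sub_one_dvd_prime (u := k) (w := u)
    (by simp [hu])
  rw [map_natCast] at hcast
  convert dvd_add hgeom hcast using 1
  simp [sum_sub_distrib]

theorem sub_one_dvd_sum_mul_geom_sum (hz : IsPrimitiveRoot z (p ^ (n + 1))) {ι : Type*}
    (s : Finset ι) (c u : ι → ℤ_[p]) (m k : ι → ℕ)
    (hu : ∀ i, PadicInt.toZMod (u i) = k i) (hcu : ∑ i ∈ s, c i * u i = 0) :
    z - 1 ∣ ∑ i ∈ s, algebraMap ℤ_[p] A (c i) * ∑ j ∈ range (k i), (z ^ m i) ^ j := by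
  have hsplit : ∑ i ∈ s, algebraMap ℤ_[p] A (c i) * ∑ j ∈ range (k i), (z ^ m i) ^ j =
      ∑ i ∈ s, algebraMap ℤ_[p] A (c i) *
        (∑ j ∈ range (k i), (z ^ m i) ^ j - algebraMap ℤ_[p] A (u i)) +
      algebraMap ℤ_[p] A (∑ i ∈ s, c i * u i) := by
    rw [map_sum, ← sum_add_distrib]
    refine sum_congr rfl fun i _ => ?_
    rw [map_mul]
    ring
  rw [hsplit, hcu, map_zero, add_zero]
  exact dvd_sum fun i _ =>
    dvd_mul_of_dvd_right (hz.sub_one_dvd_geom_sum_sub_algebraMap (m i) (k i) (hu i)) _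

theorem sum_mul_inv_pow_sub_one_mem_adjoin {K : Type*} [Field K] [Algebra ℤ_[p] K] {ζ : K}
    (hζ : IsPrimitiveRoot ζ (p ^ (n + 1))) {ι : Type*} (s : Finset ι) (c u : ι → ℤ_[p])
    (m k : ι → ℕ) (hmk : ∀ i, ζ ^ (m i * k i) = ζ)
    (hu : ∀ i, PadicInt.toZMod (u i) = k i) (hcu : ∑ i ∈ s, c i * u i = 0) :
    ∑ i ∈ s, algebraMap ℤ_[p] K (c i) * (ζ ^ m i - 1)⁻¹ ∈
      Algebra.adjoin ℤ_[p] ({ζ} : Set K) := by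
  set R := Algebra.adjoin ℤ_[p] ({ζ} : Set K)
  let z : R := ⟨ζ, Algebra.self_mem_adjoin_singleton ℤ_[p] ζ⟩
  have hz : IsPrimitiveRoot z (p ^ (n + 1)) := coe_submonoidClass_iff.mp hζ
  obtain ⟨w, hw⟩ := hz.sub_one_dvd_sum_mul_geom_sum s c u m k hu hcu
  have hζ1 : ζ ≠ 1 := hζ.ne_one (Nat.one_lt_pow n.succ_ne_zero (Fact.out : p.Prime).one_lt)
  convert w.2 using 1
  calc ∑ i ∈ s, algebraMap ℤ_[p] K (c i) * (ζ ^ m i - 1)⁻¹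
      = (ζ - 1)⁻¹ *
          ∑ i ∈ s, algebraMap ℤ_[p] K (c i) * ∑ j ∈ range (k i), (ζ ^ m i) ^ j := by
        rw [mul_sum]
        refine sum_congr rfl fun i _ => ?_
        rw [inv_pow_sub_one_eq hζ1 (hmk i)]
        ring
    _ = (ζ - 1)⁻¹ * ((ζ - 1) * w) := by
        congr 1
        simpa [z] using congrArg ((↑) : R → K) hw
    _ = w := inv_mul_cancel_left₀ (sub_ne_zero.2 hζ1) _

end IsPrimitiveRoot

theorem stmt_5_general (p n : ℕ) [Fact p.Prime]
    {K : Type*} [Field K] [CharZero K] [Algebra ℤ_[p] K]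
    (ζ : K) (hζ : IsPrimitiveRoot ζ (p ^ (n + 1)))
    (t : (ZMod p)ˣ →* (ZMod (p ^ (n + 1)))ˣ)
    (ht : ∀ a : (ZMod p)ˣ,
      Units.map (ZMod.castHom (dvd_pow_self p (Nat.succ_ne_zero n)) (ZMod p)).toMonoidHom
        (t a) = a)
    (ω : (ZMod p)ˣ →* ℤ_[p]ˣ)
    (hω : ∀ a : (ZMod p)ˣ, PadicInt.toZMod ((ω a : ℤ_[p]ˣ) : ℤ_[p]) = (a : ZMod p))
    (χ : (ZMod p)ˣ →* Kˣ)
    (hχ : χ ≠ ((Units.map (algebraMap ℤ_[p] K).toMonoidHom).comp ω)⁻¹) :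
    ((p : K) - 1)⁻¹ *
        ∑ a : (ZMod p)ˣ,
          ((χ a : K))⁻¹ *
            (ζ ^ (((t a : (ZMod (p ^ (n + 1)))ˣ) : ZMod (p ^ (n + 1))).val) - 1)⁻¹
      ∈ Algebra.adjoin ℤ_[p] ({ζ} : Set K) := by
  set e : (ZMod p)ˣ → ℕ := fun a => ((t a : (ZMod (p ^ (n + 1)))ˣ) : ZMod (p ^ (n + 1))).val
  have he : ∀ a, ζ ^ (e a * e a⁻¹) = ζ := fun a =>
    hζ.pow_val_mul_val <| by
      rw [← Units.val_mul, ← map_mul, mul_inv_cancel, map_one, Units.val_one]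
  have hωe : ∀ a, PadicInt.toZMod (ω a⁻¹ : ℤ_[p]) = e a⁻¹ := fun a => by
    rw [hω, ZMod.natCast_val, ← congrArg Units.val (ht a⁻¹)]
    rfl
  have hinj : Function.Injective ((Units.map (algebraMap ℤ_[p] K).toMonoidHom).comp ω) :=
    fun a b hab => Units.ext <| by
      rw [← hω a, ← hω b, PadicInt.algebraMap_injective (congrArg Units.val hab)]
  obtain ⟨τ, hτ⟩ := MonoidHom.exists_eq_comp_of_injective hinj χ
  have hτω : ω.comp τ ≠ ω⁻¹ := fun h => hχ <| by
    rw [hτ, MonoidHom.comp_assoc, h, MonoidHom.comp_inv]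
  have horth : ∑ a, (ω (τ a⁻¹) : ℤ_[p]) * ω a⁻¹ = 0 :=
    (Equiv.sum_comp (Equiv.inv _) fun a => (ω (τ a) : ℤ_[p]) * ω a).trans
      (sum_units_mul_eq_zero hτω)
  refine mul_mem (PadicInt.inv_natCast_sub_one_mem _) ?_
  convert hζ.sum_mul_inv_pow_sub_one_mem_adjoin univ (fun a => ω (τ a⁻¹)) (fun a => ω a⁻¹)
    e (fun a => e a⁻¹) he hωe horth using 3 with a
  simp [hτ]

/-- Let `p` be an odd prime, `ζ` a primitive `p^(n+1)`-th root of unity in a field `K`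
over `ℤ_p` (e.g. an algebraic closure of `ℚ_p`), `π = ζ - 1`, and `Δ = (ℤ/pℤ)^×`, which
acts via the splitting `t` of the reduction `(ℤ/p^(n+1)ℤ)^× → (ℤ/pℤ)^×` by
`σ_a(ζ) = ζ^(t a)`.  Let `ω` be the Teichmüller character and `χ : Δ → K^×` a character
with `χ ≠ ω⁻¹`.  Then `e_χ(1/π) = (1/(p-1)) Σ_{a ∈ Δ} χ̄(a)·σ_a(1/π)` lies in `ℤ_p[ζ]`. -/
theorem stmt_5 (p n : ℕ) [Fact p.Prime] (hodd : Odd p)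
    {K : Type*} [Field K] [CharZero K] [Algebra ℤ_[p] K]
    (ζ : K) (hζ : IsPrimitiveRoot ζ (p ^ (n + 1)))
    (t : (ZMod p)ˣ →* (ZMod (p ^ (n + 1)))ˣ)
    (ht : ∀ a : (ZMod p)ˣ,
      Units.map (ZMod.castHom (dvd_pow_self p (Nat.succ_ne_zero n)) (ZMod p)).toMonoidHom
        (t a) = a)
    (ω : (ZMod p)ˣ →* ℤ_[p]ˣ)
    (hω : ∀ a : (ZMod p)ˣ, PadicInt.toZMod ((ω a : ℤ_[p]ˣ) : ℤ_[p]) = (a : ZMod p))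
    (χ : (ZMod p)ˣ →* Kˣ)
    (hχ : χ ≠ ((Units.map (algebraMap ℤ_[p] K).toMonoidHom).comp ω)⁻¹) :
    ((p : K) - 1)⁻¹ *
        ∑ a : (ZMod p)ˣ,
          ((χ a : K))⁻¹ *
            (ζ ^ (((t a : (ZMod (p ^ (n + 1)))ˣ) : ZMod (p ^ (n + 1))).val) - 1)⁻¹
      ∈ Algebra.adjoin ℤ_[p] ({ζ} : Set K) :=
  stmt_5_general p n ζ hζ t ht ω hω χ hχ
end

section
/- Let p be an odd prime, ζ_p a primitive p-th root of unity, π = ζ_p - 1, and x ∈ π² Z_p[ζ_p]. Then log_p(1+x) ≡ ((1+x)^p - 1)/p (mod p·π²·Z_p[ζ_p]), where log_p is the p-adic logarithm. -/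
open Finset

private lemma aux_pow_lb (q : ℕ) : ∀ t : ℕ, q * t + 1 ≤ (q + 1) ^ t := by
  intro t
  induction t with
  | zero => simp
  | succ t ih =>
    have h1 : 1 ≤ (q + 1) ^ t := Nat.one_le_pow _ _ (Nat.succ_pos q)
    calc q * (t + 1) + 1 = (q * t + 1) + q := by ring
    _ ≤ (q + 1) ^ t + q := by omega
    _ ≤ (q + 1) ^ t + q * (q + 1) ^ t := by nlinarith
    _ = (q + 1) ^ (t + 1) := by ring

private lemma aux_choose_zmod (p : ℕ) (hp : p.Prime) :
    ∀ k, k ≤ p - 1 → ((p - 1).choose k : ZMod p) = (-1) ^ k := by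
  intro k
  induction k with
  | zero => intro _; simp
  | succ k ih =>
    intro hk
    have hp2 := hp.two_le
    have hk' : k ≤ p - 1 := by omega
    have h1 : p.choose (k + 1) = (p - 1).choose k + (p - 1).choose (k + 1) := by
      conv_lhs => rw [show p = (p - 1) + 1 by omega]
      exact Nat.choose_succ_succ _ _
    have h2 : p ∣ p.choose (k + 1) :=
      Nat.Prime.dvd_choose_self hp (Nat.succ_ne_zero k) (by omega)
    have h3 : ((p.choose (k + 1) : ZMod p)) = 0 :=
      (ZMod.natCast_eq_zero_iff _ _).2 h2
    have h4 := congrArg (Nat.cast : ℕ → ZMod p) h1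
    push_cast at h4
    rw [h3, ih hk'] at h4
    rw [pow_succ]
    linear_combination -h4

set_option maxHeartbeats 1000000 in
/-- Let `p` be an odd prime, `ζ_p` a primitive `p`-th root of unity, `π = ζ_p - 1`, and
`x ∈ π² ℤ_p[ζ_p]`.  Then `log_p(1+x) ≡ ((1+x)^p - 1)/p  (mod p·π²·ℤ_p[ζ_p])`, where
`log_p(1+x) = Σ_{m≥1} (-1)^(m+1) x^m / m` is the `p`-adic logarithm. -/
theorem stmt_6 (p : ℕ) [Fact p.Prime] (hodd : Odd p)
    {K : Type*} [NontriviallyNormedField K] [NormedAlgebra ℚ_[p] K] [CompleteSpace K]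
    [Algebra ℤ_[p] K] [IsScalarTower ℤ_[p] ℚ_[p] K]
    (ζ : K) (hζ : IsPrimitiveRoot ζ p) (x : K)
    (hx : ∃ y ∈ Algebra.adjoin ℤ_[p] ({ζ} : Set K), x = (ζ - 1) ^ 2 * y) :
    ∃ z ∈ Algebra.adjoin ℤ_[p] ({ζ} : Set K),
      (∑' m : ℕ, (-1) ^ m / ((m : K) + 1) * x ^ (m + 1)) - ((1 + x) ^ p - 1) / (p : K)
        = (p : K) * (ζ - 1) ^ 2 * z := by
  classical
  obtain ⟨y, hyO, hxy⟩ := hx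
  have hp : p.Prime := Fact.out
  have hp2 := hp.two_le
  haveI : CharZero K := charZero_of_injective_algebraMap (algebraMap ℚ_[p] K).injective
  haveI : NeZero p := ⟨hp.ne_zero⟩
  set O : Subalgebra ℤ_[p] K := Algebra.adjoin ℤ_[p] ({ζ} : Set K) with hOdef
  have hζO : ζ ∈ O := Algebra.subset_adjoin rfl
  set π : K := ζ - 1 with hπdef
  have hπO : π ∈ O := sub_mem hζO (one_mem O)
  have hζp : ζ ^ p = 1 := hζ.pow_eq_one
  have hζ1 : ζ ≠ 1 := hζ.ne_one hp.one_lt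
  have hπ0 : π ≠ 0 := sub_ne_zero.mpr hζ1
  have hpK : (p : K) ≠ 0 := Nat.cast_ne_zero.mpr hp.ne_zero
  -- factorization helper
  have hfact : ∀ n : ℕ, n ≠ 0 → ∃ t m' : ℕ, n = p ^ t * m' ∧ ¬ p ∣ m' ∧ p ^ t ≤ n ∧ m' ≠ 0 := by
    intro n hn
    refine ⟨n.factorization p, ordCompl[p] n, (Nat.ordProj_mul_ordCompl_eq_self n p).symm,
      Nat.not_dvd_ordCompl hp hn, Nat.ordProj_le p hn, (Nat.ordCompl_pos p hn).ne'⟩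
  -- units of ℤ_p give inverses in O
  have hinvO : ∀ m' : ℕ, ¬ p ∣ m' → ((m' : K))⁻¹ ∈ O := by
    intro m' hm'
    have h1 : ‖(m' : ℤ_[p])‖ = 1 := by
      refine le_antisymm (PadicInt.norm_le_one _) ?_
      by_contra h
      push_neg at h
      have h2 : ‖((m' : ℤ) : ℤ_[p])‖ < 1 := by exact_mod_cast h
      have h3 := (PadicInt.norm_int_lt_one_iff_dvd (m' : ℤ)).1 h2
      exact hm' (by exact_mod_cast h3)
    obtain ⟨u, hu⟩ := PadicInt.isUnit_iff.2 h1
    have h3 : ((m' : K)) * algebraMap ℤ_[p] K ((u⁻¹ : ℤ_[p]ˣ) : ℤ_[p]) = 1 := by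
      rw [show ((m' : K)) = algebraMap ℤ_[p] K (m' : ℤ_[p]) by rw [map_natCast], ← map_mul, ← hu,
        Units.mul_inv, map_one]
    rw [inv_eq_of_mul_eq_one_right h3]
    exact Subalgebra.algebraMap_mem O _
  -- norm of algebra map of naturals
  have hnormNat : ∀ n : ℕ, ‖(n : K)‖ = ‖(n : ℚ_[p])‖ := by
    intro n
    rw [show ((n : K)) = algebraMap ℚ_[p] K (n : ℚ_[p]) by rw [map_natCast], norm_algebraMap']
  have hnp : ‖(p : K)‖ = (p : ℝ)⁻¹ := by rw [hnormNat, Padic.norm_p]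
  -- compactness of O
  have hOc : IsCompact (O : Set K) := by
    haveI : ContinuousSMul ℤ_[p] K := by
      constructor
      have hcoe : Continuous (fun r : ℤ_[p] => (r : ℚ_[p])) :=
        (Isometry.of_dist_eq (fun a b => by
          rw [dist_eq_norm, dist_eq_norm, ← PadicInt.coe_sub,
            PadicInt.padic_norm_e_of_padicInt])).continuous
      have heq : (fun q : ℤ_[p] × K => q.1 • q.2)
          = fun q : ℤ_[p] × K => ((q.1 : ℚ_[p]) • q.2) := by
        funext q
        rw [← algebraMap_smul ℚ_[p] q.1 q.2, PadicInt.algebraMap_apply]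
      rw [heq]
      exact ((hcoe.comp continuous_fst).smul continuous_snd)
    have hint : IsIntegral ℤ_[p] ζ := by
      refine ⟨Polynomial.X ^ p - Polynomial.C 1, ?_, ?_⟩
      · exact Polynomial.monic_X_pow_sub_C (1 : ℤ_[p]) hp.ne_zero
      · simp [hζp]
    obtain ⟨s, hs⟩ := hint.fg_adjoin_singleton
    have hrange : Set.range (fun c : {i // i ∈ s} → ℤ_[p] => ∑ i ∈ s.attach, c i • (i : K))
        = (O : Set K) := by
      ext w
      constructor
      · rintro ⟨cc, rfl⟩
        have hmem : ∑ i ∈ s.attach, cc i • (i : K) ∈ Submodule.span ℤ_[p] (s : Set K) :=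
          Submodule.sum_mem _ fun i _ => Submodule.smul_mem _ _ (Submodule.subset_span i.2)
        rw [hs] at hmem
        exact hmem
      · intro hw
        have hw' : w ∈ Submodule.span ℤ_[p] ((s : Finset K) : Set K) := by
          rw [hs]; exact hw
        obtain ⟨cfun, -, hcfun⟩ := Submodule.mem_span_finset.1 hw'
        refine ⟨fun i => cfun i, ?_⟩
        rw [← hcfun]
        exact Finset.sum_attach s (fun i => cfun i • i)
    have hphi : Continuous (fun cc : {i // i ∈ s} → ℤ_[p] => ∑ i ∈ s.attach, cc i • (i : K)) :=
      continuous_finset_sum _ (fun i _ => ((continuous_apply i).smul continuous_const))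
    have hcompact := isCompact_range hphi
    rwa [hrange] at hcompact
  -- all elements of O have norm at most one
  have hOne : ∀ w ∈ O, ‖w‖ ≤ 1 := by
    obtain ⟨C, hC⟩ := hOc.bddAbove_image continuous_norm.continuousOn
    intro w hw
    by_contra h
    push_neg at h
    obtain ⟨n, hn⟩ := pow_unbounded_of_one_lt C h
    have hle : ‖w ^ n‖ ≤ C := hC (Set.mem_image_of_mem _ (pow_mem hw n))
    rw [norm_pow] at hle
    exact absurd hle (not_le.mpr hn)
  -- the key identity : π ^ (p-1) = p * v with v ∈ O
  obtain ⟨v, hvO, hv⟩ : ∃ v ∈ O, π ^ (p - 1) = (p : K) * v := by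
    have hbin0 : ∑ k ∈ range (p + 1), π ^ k * (p.choose k : K) = 1 := by
      have h := add_pow π 1 p
      simp only [one_pow, mul_one] at h
      rw [← h, hπdef, show ζ - 1 + 1 = ζ from by ring, hζp]
    have hsum0 : ∑ k ∈ range p, π ^ (k + 1) * (p.choose (k + 1) : K) = 0 := by
      have h := hbin0
      rw [Finset.sum_range_succ'] at h
      simp only [pow_zero, one_mul, Nat.choose_zero_right, Nat.cast_one, mul_one] at h
      linear_combination h
    have hsum1 : ∑ k ∈ range p, π ^ k * (p.choose (k + 1) : K) = 0 := by
      have h : π * ∑ k ∈ range p, π ^ k * (p.choose (k + 1) : K) = 0 := by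
        rw [Finset.mul_sum, ← hsum0]
        exact Finset.sum_congr rfl fun k _ => by ring
      rcases mul_eq_zero.1 h with h' | h'
      · exact absurd h' hπ0
      · exact h'
    have hlast : π ^ (p - 1) = -∑ k ∈ range (p - 1), π ^ k * (p.choose (k + 1) : K) := by
      have h := hsum1
      rw [show range p = range ((p - 1) + 1) from by congr 1; omega, Finset.sum_range_succ,
        show p - 1 + 1 = p from by omega, Nat.choose_self, Nat.cast_one, mul_one] at h
      exact eq_neg_of_add_eq_zero_left (by linear_combination h)
    refine ⟨-∑ k ∈ range (p - 1), ((p.choose (k + 1) / p : ℕ) : K) * π ^ k, ?_, ?_⟩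
    · exact neg_mem (sum_mem fun k _ => mul_mem (natCast_mem O _) (pow_mem hπO k))
    · rw [hlast, mul_neg, neg_inj, Finset.mul_sum]
      refine Finset.sum_congr rfl fun k hk => ?_
      simp only [mem_range] at hk
      have hdvd : p ∣ p.choose (k + 1) :=
        Nat.Prime.dvd_choose_self hp (Nat.succ_ne_zero k) (by omega)
      have hdc : (p * (p.choose (k + 1) / p) : ℕ) = p.choose (k + 1) := Nat.mul_div_cancel' hdvd
      calc π ^ k * (p.choose (k + 1) : K)
          = π ^ k * (((p * (p.choose (k + 1) / p) : ℕ)) : K) := by rw [hdc]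
      _ = (p : K) * (((p.choose (k + 1) / p : ℕ) : K) * π ^ k) := by push_cast; ring
  -- π has norm < 1
  have hπlt : ‖π‖ < 1 := by
    have h1 : ‖π‖ ^ (p - 1) = ‖(p : K)‖ * ‖v‖ := by rw [← norm_pow, hv, norm_mul]
    have hp1 : (1 : ℝ) < p := by exact_mod_cast hp.one_lt
    have h2 : ‖π‖ ^ (p - 1) < 1 := by
      rw [h1, hnp]
      calc (p : ℝ)⁻¹ * ‖v‖ ≤ (p : ℝ)⁻¹ * 1 := by
            have := hOne v hvO
            gcongr
      _ < 1 := by rw [mul_one]; exact inv_lt_one_of_one_lt₀ hp1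
    exact (pow_lt_one_iff_of_nonneg (norm_nonneg _) (by omega)).1 h2
  have hxlt : ‖x‖ < 1 := by
    rw [hxy, norm_mul, norm_pow]
    calc ‖π‖ ^ 2 * ‖y‖ ≤ ‖π‖ ^ 2 * 1 := by
          have := hOne y hyO
          gcongr
    _ = ‖π‖ ^ 2 := mul_one _
    _ < 1 := pow_lt_one₀ (norm_nonneg _) hπlt two_ne_zero
  -- the series
  set f : ℕ → K := fun m => (-1) ^ m / ((m : K) + 1) * x ^ (m + 1) with hfdef
  set b : ℕ → K := fun m => if m < p then (p.choose (m + 1) : K) / (p : K) * x ^ (m + 1) else 0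
    with hbdef
  -- lower bound on norms of natural numbers in K
  have hlow : ∀ n : ℕ, n ≠ 0 → ((n : ℝ))⁻¹ ≤ ‖(n : K)‖ := by
    intro n hn
    obtain ⟨t, m', hnm, hm'd, hle, hm'0⟩ := hfact n hn
    have hm'norm : ‖((m' : ℕ) : ℚ_[p])‖ = 1 := by
      refine le_antisymm (by exact_mod_cast Padic.norm_int_le_one (p := p) (m' : ℤ)) ?_
      by_contra h
      push_neg at h
      have h2 := (Padic.norm_intCast_lt_one_iff (k := (m' : ℤ))).1 (by exact_mod_cast h)
      exact hm'd (by exact_mod_cast h2)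
    have hval : ‖(n : ℚ_[p])‖ = ((p : ℝ) ^ t)⁻¹ := by
      rw [hnm]
      push_cast
      rw [norm_mul, norm_pow, Padic.norm_p, hm'norm, mul_one, inv_pow]
    rw [hnormNat, hval]
    have h1 : ((p : ℝ) ^ t) ≤ (n : ℝ) := by exact_mod_cast hle
    have h2 : (0 : ℝ) < (p : ℝ) ^ t := by positivity
    exact inv_anti₀ h2 h1
  -- summability of f
  have hsumf : Summable f := by
    have hgeo : Summable (fun n : ℕ => (n : ℝ) ^ 1 * ‖x‖ ^ n) :=
      summable_pow_mul_geometric_of_norm_lt_one 1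
        (by rw [Real.norm_of_nonneg (norm_nonneg x)]; exact hxlt)
    have hb2 : Summable (fun m : ℕ => ((m + 1 : ℕ) : ℝ) ^ 1 * ‖x‖ ^ (m + 1)) :=
      (summable_nat_add_iff 1).2 hgeo
    refine Summable.of_norm_bounded hb2 ?_
    intro m
    have hNpos : (0 : ℝ) < ((m + 1 : ℕ) : ℝ) := by positivity
    have hNK : (0 : ℝ) < ‖((m + 1 : ℕ) : K)‖ := by
      have := hlow (m + 1) (Nat.succ_ne_zero m)
      have h2 : (0 : ℝ) < ((m + 1 : ℕ) : ℝ)⁻¹ := by positivity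
      linarith
    have h1 : ‖f m‖ = ‖x‖ ^ (m + 1) / ‖((m + 1 : ℕ) : K)‖ := by
      simp only [hfdef]
      rw [show ((m : K) + 1) = ((m + 1 : ℕ) : K) from by push_cast; ring]
      rw [norm_mul, norm_div, norm_pow, norm_pow, norm_neg, norm_one, one_pow]
      ring
    rw [h1, div_le_iff₀ hNK]
    calc ‖x‖ ^ (m + 1)
        = (((m + 1 : ℕ) : ℝ))⁻¹ * ((m + 1 : ℕ) : ℝ) * ‖x‖ ^ (m + 1) := by
          rw [inv_mul_cancel₀ (ne_of_gt hNpos), one_mul]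
    _ ≤ ‖((m + 1 : ℕ) : K)‖ * ((m + 1 : ℕ) : ℝ) * ‖x‖ ^ (m + 1) := by
          have := hlow (m + 1) (Nat.succ_ne_zero m)
          gcongr
    _ = ((m + 1 : ℕ) : ℝ) ^ 1 * ‖x‖ ^ (m + 1) * ‖((m + 1 : ℕ) : K)‖ := by ring
  have hsumb : Summable b := by
    apply summable_of_ne_finset_zero (s := range p)
    intro m hm
    simp only [mem_range] at hm
    simp only [hbdef]
    rw [if_neg hm]
  -- value of the finite sum
  have htsumb : ∑' m, b m = ((1 + x) ^ p - 1) / (p : K) := by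
    rw [tsum_eq_sum (s := range p) (fun m hm => by
      simp only [mem_range] at hm
      simp only [hbdef]
      rw [if_neg hm])]
    have hbin : (1 + x) ^ p = ∑ k ∈ range (p + 1), x ^ k * (p.choose k : K) := by
      rw [add_comm 1 x]
      have h := add_pow x 1 p
      simpa using h
    have h2 : (1 + x) ^ p - 1 = ∑ k ∈ range p, x ^ (k + 1) * (p.choose (k + 1) : K) := by
      rw [hbin, Finset.sum_range_succ']
      simp
    rw [h2, Finset.sum_div]
    refine Finset.sum_congr rfl fun m hm => ?_
    simp only [mem_range] at hm
    simp only [hbdef]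
    rw [if_pos hm]
    ring
  -- power decomposition of x
  have hxpow : ∀ m : ℕ, x ^ (m + 1) = π ^ 2 * (π ^ (2 * m) * y ^ (m + 1)) := by
    intro m
    rw [hxy, mul_pow, ← pow_mul, show 2 * (m + 1) = 2 + 2 * m from by ring, pow_add, mul_assoc]
  -- the submodule T = p π² O
  set c : K := (p : K) * π ^ 2 with hcdef
  set T : Submodule ℤ_[p] K := (Subalgebra.toSubmodule O).map (LinearMap.mulLeft ℤ_[p] c)
    with hTdef
  have hmemT : ∀ u : K, (∃ w ∈ O, u = c * w) → u ∈ T := by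
    rintro u ⟨w, hw, rfl⟩
    exact Submodule.mem_map.2 ⟨w, hw, by rw [LinearMap.mulLeft_apply]⟩
  have hTc : IsClosed (T : Set K) := by
    have himg : (T : Set K) = (fun w => c * w) '' (O : Set K) := by
      ext u
      simp only [hTdef, Submodule.map_coe, LinearMap.mulLeft_apply]
      rfl
    rw [himg]
    exact ((hOc.image (continuous_const.mul continuous_id))).isClosed
  -- each term of the difference series lies in T
  have hdiffmem : ∀ m : ℕ, f m - b m ∈ T := by
    intro m
    rcases lt_trichotomy (m + 1) p with hmp | hmp | hmp
    · -- head case : 1 ≤ m+1 ≤ p-1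
      have hmlt : m < p := by omega
      have hbm : b m = (p.choose (m + 1) : K) / (p : K) * x ^ (m + 1) := by
        simp only [hbdef]; rw [if_pos hmlt]
      have hzm : (((p - 1).choose m : ZMod p)) = (-1) ^ m := aux_choose_zmod p hp m (by omega)
      have hdvd : (p : ℤ) ∣ ((p - 1).choose m : ℤ) - (-1) ^ m := by
        have h0 : ((((p - 1).choose m : ℤ) - (-1) ^ m : ℤ) : ZMod p) = 0 := by
          push_cast
          rw [hzm]
          ring
        exact_mod_cast (ZMod.intCast_zmod_eq_zero_iff_dvd _ p).1 h0
      obtain ⟨e, he⟩ := hdvd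
      have hid : (p : ℤ) * ((p - 1).choose m : ℤ) = (p.choose (m + 1) : ℤ) * (m + 1 : ℤ) := by
        have h := Nat.add_one_mul_choose_eq (p - 1) m
        rw [show p - 1 + 1 = p from by omega] at h
        exact_mod_cast h
      have hNne : (((m + 1 : ℕ) : K)) ≠ 0 := Nat.cast_ne_zero.mpr (Nat.succ_ne_zero m)
      have heK : (((p - 1).choose m : ℕ) : K) - (-1) ^ m = (p : K) * ((e : ℤ) : K) := by
        have h := congrArg (fun z : ℤ => (z : K)) he
        push_cast at h
        exact_mod_cast h
      have hidK : (p : K) * (((p - 1).choose m : ℕ) : K)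
          = ((p.choose (m + 1) : ℕ) : K) * ((m + 1 : ℕ) : K) := by
        have h := congrArg (fun z : ℤ => (z : K)) hid
        push_cast at h
        exact_mod_cast h
      have hcoeff : (-1) ^ m / ((m + 1 : ℕ) : K) - (p.choose (m + 1) : K) / (p : K)
          = (p : K) * (-((e : ℤ) : K) / ((m + 1 : ℕ) : K)) := by
        rw [div_sub_div _ _ hNne hpK, ← mul_div_assoc,
          div_eq_div_iff (mul_ne_zero hNne hpK) hNne]
        linear_combination (-(((m + 1 : ℕ) : K) * (p : K))) * heK + ((m + 1 : ℕ) : K) * hidK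
      have hndvd : ¬ p ∣ (m + 1) := fun hd =>
        absurd (Nat.le_of_dvd (Nat.succ_pos m) hd) (by omega)
      refine hmemT _ ⟨-((e : ℤ) : K) / ((m + 1 : ℕ) : K) * (π ^ (2 * m) * y ^ (m + 1)), ?_, ?_⟩
      · refine mul_mem ?_ (mul_mem (pow_mem hπO _) (pow_mem hyO _))
        rw [div_eq_mul_inv]
        exact mul_mem (neg_mem (intCast_mem O _)) (hinvO _ hndvd)
      · have h1 : f m - b m
            = ((-1) ^ m / ((m + 1 : ℕ) : K) - (p.choose (m + 1) : K) / (p : K)) * x ^ (m + 1) := by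
          simp only [hfdef, hbm]
          rw [show ((m : K) + 1) = ((m + 1 : ℕ) : K) from by push_cast; ring]
          ring
        rw [h1, hcoeff, hxpow m, hcdef]
        ring
    · -- middle case : m + 1 = p, the terms cancel
      have hmlt : m < p := by omega
      have hbm : b m = (p.choose (m + 1) : K) / (p : K) * x ^ (m + 1) := by
        simp only [hbdef]; rw [if_pos hmlt]
      have heven : (-1 : K) ^ m = 1 := Even.neg_one_pow (by
        have h1 : Even (p - 1) := Nat.Odd.sub_odd hodd odd_one
        have h2 : m = p - 1 := by omega
        rwa [h2])
      have h0 : f m - b m = 0 := by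
        simp only [hfdef, hbm]
        rw [hmp, Nat.choose_self, heven,
          show ((m : K) + 1) = (p : K) from by rw [← hmp]; push_cast; ring]
        push_cast
        ring
      rw [h0]
      exact Submodule.zero_mem T
    · -- tail case : m + 1 > p
      have hbm : b m = 0 := by
        simp only [hbdef]
        rw [if_neg (by omega)]
      obtain ⟨q, hq⟩ : ∃ q, p = q + 1 := ⟨p - 1, by omega⟩
      obtain ⟨t, m', hnm, hm'd, hle, hm'0⟩ := hfact (m + 1) (Nat.succ_ne_zero m)
      have hvq : π ^ q = (p : K) * v := by
        rw [show q = p - 1 from by omega]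
        exact hv
      have hineq : q * (t + 1) ≤ 2 * m := by
        have h1 : q * t + 1 ≤ p ^ t := by
          have h := aux_pow_lb q t
          rwa [← hq] at h
        have h2 : p ^ t ≤ m + 1 := hle
        have h3 : q * (t + 1) = q * t + q := by ring
        have h4 : q + 1 < m + 1 := by omega
        linarith
      have hr : q * (t + 1) + (2 * m - q * (t + 1)) = 2 * m := Nat.add_sub_cancel' hineq
      have hπ2m : π ^ (2 * m)
          = ((p : K) * v) ^ (t + 1) * π ^ (2 * m - q * (t + 1)) := by
        rw [← hvq, ← pow_mul, ← pow_add, hr]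
      have hm'K : ((m' : K)) ≠ 0 := Nat.cast_ne_zero.mpr hm'0
      have hptK : ((p : K) ^ t) ≠ 0 := pow_ne_zero _ hpK
      refine hmemT _ ⟨(-1) ^ m * ((m' : K))⁻¹
          * (v ^ (t + 1) * (π ^ (2 * m - q * (t + 1)) * y ^ (m + 1))), ?_, ?_⟩
      · exact mul_mem (mul_mem (pow_mem (neg_mem (one_mem O)) m) (hinvO m' hm'd))
          (mul_mem (pow_mem hvO _) (mul_mem (pow_mem hπO _) (pow_mem hyO _)))
      · have hcast : ((m : K) + 1) = ((p : K) ^ t * (m' : K)) := by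
          rw [show ((m : K) + 1) = ((m + 1 : ℕ) : K) from by push_cast; ring, hnm]
          push_cast
          ring
        simp only [hfdef, hbm, sub_zero]
        rw [hcast, hxpow m, hπ2m, hcdef]
        field_simp
        ring
  -- assemble
  have hsumfb : Summable (fun m => f m - b m) := hsumf.sub hsumb
  have hS : ∑' m, (f m - b m) = (∑' m, f m) - ((1 + x) ^ p - 1) / (p : K) := by
    rw [Summable.tsum_sub hsumf hsumb, htsumb]
  have hmem : (∑' m, (f m - b m)) ∈ T := by
    refine hTc.mem_of_tendsto hsumfb.hasSum ?_
    exact Filter.Eventually.of_forall fun sfin => Submodule.sum_mem _ fun m _ => hdiffmem m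
  obtain ⟨z, hzO, hz⟩ := Submodule.mem_map.1 hmem
  refine ⟨z, hzO, ?_⟩
  rw [LinearMap.mulLeft_apply] at hz
  rw [← hS, ← hz, hcdef]
end

section
/- Let p be an odd prime, n ≥ 0, and U_n = 1 + (ζ - 1)·Z_p[ζ] the group of principal units of ℚ_p(ζ) where ζ is a primitive p^(n+1)-th root of unity. Then log_p(U_n) ⊆ (1/p^n)·Z_p[ζ]. -/
private lemma stmt7_bern (q j : ℕ) (hq : 1 ≤ q) : q * j ≤ (q + 1) ^ j := by
  induction j with
  | zero => simp
  | succ j ih =>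
    have h1 : 1 ≤ (q + 1) ^ j := Nat.one_le_pow _ _ (by omega)
    calc q * (j + 1) = q * j + q := by ring
    _ ≤ (q + 1) ^ j + q * (q + 1) ^ j :=
        Nat.add_le_add ih (Nat.le_mul_of_pos_right q (by omega))
    _ = (q + 1) ^ (j + 1) := by ring

private lemma stmt7_isUnit (p : ℕ) [Fact p.Prime] (M' : ℕ) (h : ¬ (p ∣ M')) :
    IsUnit ((M' : ℤ_[p])) := by
  rw [PadicInt.isUnit_iff]
  have key : ‖((M' : ℤ) : ℚ_[p])‖ < 1 ↔ (p : ℤ) ∣ (M' : ℤ) := Padic.norm_intCast_lt_one_iff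
  have h2 : ((M' : ℤ_[p]) : ℚ_[p]) = ((M' : ℤ) : ℚ_[p]) := by push_cast; ring
  have h2' : ‖(M' : ℤ_[p])‖ = ‖((M' : ℤ) : ℚ_[p])‖ := by rw [PadicInt.norm_def, h2]
  have h3 : ‖(M' : ℤ_[p])‖ ≤ 1 := PadicInt.norm_le_one _
  have h4 : ¬ ((p : ℤ) ∣ (M' : ℤ)) := by exact_mod_cast h
  by_contra hne
  rw [h2'] at h3 hne
  exact h4 (key.mp (lt_of_le_of_ne h3 hne))

open Finset in
private lemma stmt7_adjoin_closed (p : ℕ) [Fact p.Prime] {K : Type*} [NontriviallyNormedField K]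
    [NormedAlgebra ℚ_[p] K] [Algebra ℤ_[p] K] [IsScalarTower ℤ_[p] ℚ_[p] K]
    (ζ : K) (N : ℕ) (hN : 0 < N) (h1 : ζ ^ N = 1) :
    IsClosed ((Algebra.adjoin ℤ_[p] ({ζ} : Set K) : Subalgebra ℤ_[p] K) : Set K) := by
  set v : Fin N → K := fun i => ζ ^ (i : ℕ) with hv
  have hspan : (Algebra.adjoin ℤ_[p] ({ζ} : Set K) : Set K)
      = (Submodule.span ℤ_[p] (Set.range v) : Set K) := by
    have h2 : Subalgebra.toSubmodule (Algebra.adjoin ℤ_[p] ({ζ} : Set K))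
        = Submodule.span ℤ_[p] (Submonoid.closure ({ζ} : Set K)) := Algebra.adjoin_eq_span ..
    have h3 : (Submonoid.closure ({ζ} : Set K) : Set K) = Set.range fun i : ℕ => ζ ^ i := by
      rw [← Submonoid.powers_eq_closure, Submonoid.coe_powers]
    have h4 : Submodule.span ℤ_[p] (Set.range fun i : ℕ => ζ ^ i)
        = Submodule.span ℤ_[p] (Set.range v) := by
      apply le_antisymm
      · rw [Submodule.span_le]
        rintro x ⟨i, rfl⟩
        apply Submodule.subset_span
        exact ⟨⟨i % N, Nat.mod_lt _ hN⟩, (pow_eq_pow_mod i h1).symm⟩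
      · rw [Submodule.span_le]
        rintro x ⟨i, rfl⟩
        exact Submodule.subset_span ⟨(i : ℕ), rfl⟩
    have := congrArg (fun s : Submodule ℤ_[p] K => (s : Set K)) (h2.trans (h3 ▸ h4))
    exact this
  rw [hspan]
  have hrange : (Submodule.span ℤ_[p] (Set.range v) : Set K)
      = Set.range (fun c : Fin N → ℤ_[p] => ∑ i, c i • v i) := by
    rw [← Fintype.range_linearCombination ℤ_[p] v]
    ext x
    simp only [LinearMap.mem_range, SetLike.mem_coe, Set.mem_range,
      Fintype.linearCombination_apply]
  rw [hrange]
  have hcont : Continuous (fun c : Fin N → ℤ_[p] => ∑ i, c i • v i) := by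
    have : (fun c : Fin N → ℤ_[p] => ∑ i, c i • v i)
        = fun c : Fin N → ℤ_[p] => ∑ i, ((c i : ℚ_[p]) • v i) := by
      funext c
      refine Finset.sum_congr rfl fun i _ => ?_
      rw [← IsScalarTower.algebraMap_smul ℚ_[p] (c i) (v i)]
      rfl
    rw [this]
    apply continuous_finset_sum
    intro i _
    exact (((continuous_subtype_val : Continuous (fun x : ℤ_[p] => (x : ℚ_[p]))).comp
      (continuous_apply i)).smul continuous_const)
  exact (isCompact_range hcont).isClosed

open Finset Polynomial in
private lemma stmt7_pi_pow_totient (p n : ℕ) [Fact p.Prime] {K : Type*} [Field K]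
    [Algebra ℤ_[p] K] (ζ : K) (hζ : IsPrimitiveRoot ζ (p ^ (n + 1))) :
    ∃ c ∈ Algebra.adjoin ℤ_[p] ({ζ} : Set K),
      (ζ - 1) ^ (p ^ (n + 1)).totient = (p : K) * c := by
  set A := Algebra.adjoin ℤ_[p] ({ζ} : Set K) with hA
  set N := p ^ (n + 1) with hN
  have hNpos : 0 < N := pow_pos (Fact.out (p := p.Prime)).pos _
  haveI : NeZero N := ⟨hNpos.ne'⟩
  have hζA : ζ ∈ A := Algebra.self_mem_adjoin_singleton _ _
  have step1 : ∀ η ∈ primitiveRoots N K, ∃ g, g ∈ A ∧ (1 - ζ) = (1 - η) * g := by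
    intro η hη
    have hηprim : IsPrimitiveRoot η N := (mem_primitiveRoots hNpos).mp hη
    obtain ⟨i, -, hie⟩ := hηprim.eq_pow_of_pow_eq_one hζ.pow_eq_one
    obtain ⟨i', -, hi'e⟩ := hζ.eq_pow_of_pow_eq_one hηprim.pow_eq_one
    have hηA : η ∈ A := hi'e ▸ pow_mem hζA i'
    refine ⟨∑ l ∈ range i, η ^ l, sum_mem fun l _ => pow_mem hηA l, ?_⟩
    have := geom_sum_mul η i
    calc (1 : K) - ζ = -(η ^ i - 1) := by rw [hie]; ring
    _ = -((∑ l ∈ range i, η ^ l) * (η - 1)) := by rw [this]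
    _ = (1 - η) * ∑ l ∈ range i, η ^ l := by ring
  have Hg : ∀ η : K, ∃ g : K, η ∈ primitiveRoots N K → (g ∈ A ∧ (1 - ζ) = (1 - η) * g) := by
    intro η
    by_cases h : η ∈ primitiveRoots N K
    · obtain ⟨g, hg⟩ := step1 η h
      exact ⟨g, fun _ => hg⟩
    · exact ⟨1, fun h' => absurd h' h⟩
  choose g hg using Hg
  have step2 : (p : K) = ∏ η ∈ primitiveRoots N K, (1 - η) := by
    have h1 : eval 1 (cyclotomic N K) = (p : K) := eval_one_cyclotomic_prime_pow n
    rw [cyclotomic_eq_prod_X_sub_primitiveRoots hζ] at h1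
    rw [← h1, eval_prod]
    exact Finset.prod_congr rfl fun η _ => by simp
  have step4 : (1 - ζ) ^ N.totient = (p : K) * ∏ η ∈ primitiveRoots N K, g η := by
    calc (1 - ζ) ^ N.totient = ∏ _η ∈ primitiveRoots N K, (1 - ζ) := by
          rw [Finset.prod_const, hζ.card_primitiveRoots]
    _ = ∏ η ∈ primitiveRoots N K, ((1 - η) * g η) :=
          Finset.prod_congr rfl fun η hη => (hg η hη).2
    _ = (∏ η ∈ primitiveRoots N K, (1 - η)) * ∏ η ∈ primitiveRoots N K, g η :=
          Finset.prod_mul_distrib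
    _ = (p : K) * ∏ η ∈ primitiveRoots N K, g η := by rw [← step2]
  refine ⟨(-1) ^ N.totient * ∏ η ∈ primitiveRoots N K, g η,
    mul_mem (pow_mem (neg_mem (one_mem A)) _)
      (prod_mem fun η hη => (hg η hη).1), ?_⟩
  calc (ζ - 1) ^ N.totient = (-1) ^ N.totient * (1 - ζ) ^ N.totient := by
        rw [← mul_pow]; ring_nf
  _ = (-1) ^ N.totient * ((p : K) * ∏ η ∈ primitiveRoots N K, g η) := by rw [step4]
  _ = (p : K) * ((-1) ^ N.totient * ∏ η ∈ primitiveRoots N K, g η) := by ring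

/-- Let `p` be an odd prime, `ζ` a primitive `p^(n+1)`-th root of unity over `ℚ_p`, and
`U_n = 1 + (ζ-1)·ℤ_p[ζ]` the principal units.  Then `log_p(U_n) ⊆ (1/p^n)·ℤ_p[ζ]`,
where `log_p(u) = Σ_{m≥1} (-1)^(m+1) (u-1)^m / m`. -/
theorem stmt_7 (p n : ℕ) [Fact p.Prime] (hodd : Odd p)
    {K : Type*} [NontriviallyNormedField K] [NormedAlgebra ℚ_[p] K] [CompleteSpace K]
    [Algebra ℤ_[p] K] [IsScalarTower ℤ_[p] ℚ_[p] K]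
    (ζ : K) (hζ : IsPrimitiveRoot ζ (p ^ (n + 1))) (u : K)
    (hu : ∃ y ∈ Algebra.adjoin ℤ_[p] ({ζ} : Set K), u = 1 + (ζ - 1) * y) :
    ∃ z ∈ Algebra.adjoin ℤ_[p] ({ζ} : Set K),
      (∑' m : ℕ, (-1) ^ m / ((m : K) + 1) * (u - 1) ^ (m + 1)) = z / (p : K) ^ n := by
  haveI : CharZero K := charZero_of_injective_algebraMap (algebraMap ℚ_[p] K).injective
  have hp : p.Prime := Fact.out
  have hp0 : (p : K) ≠ 0 := Nat.cast_ne_zero.mpr hp.ne_zero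
  have hp2 : 2 ≤ p := hp.two_le
  set A := Algebra.adjoin ℤ_[p] ({ζ} : Set K) with hAdef
  obtain ⟨y, hyA, hyu⟩ := hu
  have hζA : ζ ∈ A := Algebra.self_mem_adjoin_singleton _ _
  have hπA : ζ - 1 ∈ A := sub_mem hζA (one_mem A)
  have huA : u - 1 ∈ A := by
    rw [hyu]; simpa using mul_mem hπA hyA
  have hu1 : u - 1 = (ζ - 1) * y := by rw [hyu]; ring
  -- the key divisibility
  obtain ⟨c, hcA, hc⟩ := stmt7_pi_pow_totient p n ζ hζ
  set e := (p ^ (n + 1)).totient with he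
  have hetot : e = p ^ n * (p - 1) := by
    rw [he, Nat.totient_prime_pow hp (by omega), Nat.add_sub_cancel]
  -- main term-wise claim
  have claim : ∀ M : ℕ, 1 ≤ M → ∃ a ∈ A, a * (M : K) = (p : K) ^ n * (u - 1) ^ M := by
    intro M hM
    set k := padicValNat p M with hk
    set M' := M / p ^ k with hM'
    have hMeq : p ^ k * M' = M := Nat.mul_div_cancel' pow_padicValNat_dvd
    have hM'nd : ¬ p ∣ M' := by
      intro hd
      apply pow_succ_padicValNat_not_dvd (p := p) (n := M) (by omega)
      rw [pow_succ, ← hk]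
      calc p ^ k * p ∣ p ^ k * M' := mul_dvd_mul_left _ hd
      _ = M := hMeq
    obtain ⟨b, hb⟩ := (stmt7_isUnit p M' hM'nd).exists_left_inv
    have hbK : algebraMap ℤ_[p] K b * (M' : K) = 1 := by
      have := congrArg (algebraMap ℤ_[p] K) hb
      rwa [map_mul, map_natCast, map_one] at this
    have hMcast : (M : K) = (p : K) ^ k * (M' : K) := by
      rw [← hMeq]; push_cast; ring
    by_cases hkn : k ≤ n
    · refine ⟨(b * (p : ℤ_[p]) ^ (n - k)) • ((u - 1) ^ M),
        Subalgebra.smul_mem A (pow_mem huA M) _, ?_⟩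
      have hpow : (p : K) ^ (n - k) * (p : K) ^ k = (p : K) ^ n := by
        rw [← pow_add, Nat.sub_add_cancel hkn]
      calc (b * (p : ℤ_[p]) ^ (n - k)) • ((u - 1) ^ M) * (M : K)
          = (algebraMap ℤ_[p] K b * (M' : K)) *
            (((p : K) ^ (n - k) * (p : K) ^ k) * (u - 1) ^ M) := by
            rw [Algebra.smul_def, map_mul, map_pow, map_natCast, hMcast]; ring
      _ = (p : K) ^ n * (u - 1) ^ M := by rw [hbK, hpow]; ring
    · -- k > n
      set j := k - n with hj
      have hkj : k = n + j := (Nat.add_sub_cancel' (le_of_not_ge hkn)).symm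
      have hMge : e * j ≤ M := by
        have h1 : p ^ k ≤ M := Nat.le_of_dvd (by omega) pow_padicValNat_dvd
        have h2 : (p - 1) * j ≤ p ^ j := by
          have := stmt7_bern (p - 1) j (by omega)
          have hq : p - 1 + 1 = p := by omega
          rwa [hq] at this
        calc e * j = p ^ n * ((p - 1) * j) := by rw [hetot]; ring
        _ ≤ p ^ n * p ^ j := Nat.mul_le_mul_left _ h2
        _ = p ^ k := by rw [← pow_add, hkj]
        _ ≤ M := h1
      refine ⟨b • (c ^ j * (ζ - 1) ^ (M - e * j) * y ^ M),
        Subalgebra.smul_mem A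
          (mul_mem (mul_mem (pow_mem hcA j) (pow_mem hπA _)) (pow_mem hyA M)) _, ?_⟩
      have hsplit : (ζ - 1) ^ M = ((p : K) ^ j * c ^ j) * (ζ - 1) ^ (M - e * j) := by
        have h5 : e * j + (M - e * j) = M := by omega
        calc (ζ - 1) ^ M = (ζ - 1) ^ (e * j) * (ζ - 1) ^ (M - e * j) := by
              rw [← pow_add, h5]
        _ = ((p : K) * c) ^ j * (ζ - 1) ^ (M - e * j) := by rw [pow_mul, hc]
        _ = ((p : K) ^ j * c ^ j) * (ζ - 1) ^ (M - e * j) := by rw [mul_pow]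
      have hppow : (p : K) ^ n * (p : K) ^ j = (p : K) ^ k := by
        rw [← pow_add, ← hkj]
      calc b • (c ^ j * (ζ - 1) ^ (M - e * j) * y ^ M) * (M : K)
          = (algebraMap ℤ_[p] K b * (M' : K)) *
            ((p : K) ^ k * (c ^ j * (ζ - 1) ^ (M - e * j) * y ^ M)) := by
            rw [Algebra.smul_def, hMcast]; ring
      _ = ((p : K) ^ n * (p : K) ^ j) * (c ^ j * (ζ - 1) ^ (M - e * j) * y ^ M) := by
            rw [hbK, hppow]; ring
      _ = (p : K) ^ n * (((p : K) ^ j * c ^ j) * (ζ - 1) ^ (M - e * j) * y ^ M) := by ring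
      _ = (p : K) ^ n * ((ζ - 1) ^ M * y ^ M) := by rw [hsplit]
      _ = (p : K) ^ n * (u - 1) ^ M := by rw [hu1, mul_pow]
  -- term-wise membership
  set f : ℕ → K := fun m => (-1) ^ m / ((m : K) + 1) * (u - 1) ^ (m + 1) with hf
  have hterm : ∀ m : ℕ, (p : K) ^ n * f m ∈ A := by
    intro m
    obtain ⟨a, haA, hae⟩ := claim (m + 1) (by omega)
    have hM0 : ((m + 1 : ℕ) : K) ≠ 0 := Nat.cast_ne_zero.mpr (by omega)
    have heq : (p : K) ^ n * f m = (-1) ^ m * a := by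
      rw [hf]
      have : a = (p : K) ^ n * (u - 1) ^ (m + 1) / ((m + 1 : ℕ) : K) :=
        (eq_div_iff hM0).mpr hae
      rw [this]
      push_cast
      ring
    rw [heq]
    exact mul_mem (pow_mem (neg_mem (one_mem A)) m) haA
  -- closedness and summation
  have hAclosed : IsClosed (A : Set K) :=
    stmt7_adjoin_closed p ζ (p ^ (n + 1)) (pow_pos hp.pos _) hζ.pow_eq_one
  have hzA : (∑' m : ℕ, (p : K) ^ n * f m) ∈ A := by
    by_cases hs : Summable (fun m : ℕ => (p : K) ^ n * f m)
    · refine hAclosed.mem_of_tendsto hs.hasSum.tendsto_sum_nat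
        (Filter.Eventually.of_forall fun s => ?_)
      exact sum_mem fun i _ => hterm i
    · rw [tsum_eq_zero_of_not_summable hs]
      exact zero_mem A
  refine ⟨∑' m : ℕ, (p : K) ^ n * f m, hzA, ?_⟩
  rw [tsum_mul_left, eq_div_iff (pow_ne_zero n hp0)]
  ring
end

section
/- Let p be prime, Γ_n cyclic of order p^n with generator γ_0, and g ∈ Z_p[[T]]. The image ε_n of g in Z_p[Γ_n] (via γ_0 ↦ 1+T, mod (1+T)^(p^n)-1) is given by ε_n = Σ_{γ∈Γ_n} [ (1/p^n) Σ_{χ} g(χ(γ_0)-1) χ̄(γ) ] γ, where the inner sum is over all characters χ of Γ_n. -/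
/-!
For a character `χ` of `Γ`, `χ(γ₀)` is a `p^n`-th root of unity, so `‖χ(γ₀) - 1‖ < 1`:
modulo `p` one has `(x + 1)^(p^n) ≡ x^(p^n) + 1`. Hence evaluation of `ℤ_p[[T]]` at
`χ(γ₀) - 1` converges and is a ring homomorphism; it kills `(1 + T)^(p^n) - 1`, so it sends `g`
to `χ(ε_n)`. The formula is then Fourier inversion on `Γ`, which follows from the orthogonality
of characters.
-/

open Finset

theorem norm_sub_one_lt_one_of_pow_prime_pow_eq_one {K : Type*} [NormedField K]
    [IsUltrametricDist K] {p : ℕ} (hp : p.Prime) (hpK : ‖(p : K)‖ < 1) {ζ : K} {n : ℕ}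
    (hζ : ζ ^ p ^ n = 1) : ‖ζ - 1‖ < 1 := by
  have hN : p ^ n ≠ 0 := (pow_pos hp.pos n).ne'
  have hζ_norm : ‖ζ‖ = 1 := by
    rw [← pow_eq_one_iff_of_nonneg (norm_nonneg ζ) hN, ← norm_pow, hζ, norm_one]
  have hx : ‖ζ - 1‖ ≤ 1 := by
    simpa [hζ_norm, sub_eq_add_neg] using IsUltrametricDist.norm_add_le_max ζ (-1)
  -- `(x + 1) ^ p ^ n = x ^ p ^ n + 1 + p * x * r` with `r` an integral polynomial in `x := ζ - 1`
  set r := ∑ k ∈ Ioo 0 (p ^ n),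
    (ζ - 1) ^ (k - 1) * 1 ^ (p ^ n - k - 1) * ((p ^ n).choose k / p : ℕ)
  have hexp := add_pow_prime_pow_eq hp (ζ - 1) 1 n
  have hr : ‖r‖ ≤ 1 := by
    refine IsUltrametricDist.norm_sum_le_of_forall_le_of_nonneg zero_le_one fun k _ => ?_
    rw [one_pow, mul_one, norm_mul, norm_pow]
    exact mul_le_one₀ (pow_le_one₀ (norm_nonneg _) hx) (norm_nonneg _)
      (IsUltrametricDist.norm_natCast_le_one K _)
  by_contra! h
  have hx1 : ‖ζ - 1‖ = 1 := le_antisymm hx h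
  have : (ζ - 1) ^ p ^ n = -(p * (ζ - 1) * 1 * r) := by
    rw [sub_add_cancel, hζ, one_pow] at hexp
    linear_combination -hexp
  have := congrArg norm this
  rw [norm_pow, hx1, one_pow, norm_neg, mul_one, norm_mul, norm_mul, hx1, mul_one] at this
  nlinarith [norm_nonneg r, norm_nonneg (p : K)]

namespace PowerSeries

variable {R K : Type*} [CommSemiring R] [NormedField K]

theorem summable_norm_map_coeff_mul_pow {φ : R →+* K} (hφ : ∀ c, ‖φ c‖ ≤ 1) {z : K}
    (hz : ‖z‖ < 1) (f : R⟦X⟧) :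
    Summable fun m => ‖φ (coeff m f) * z ^ m‖ := by
  refine Summable.of_nonneg_of_le (fun _ => norm_nonneg _) (fun m => ?_)
    (summable_geometric_of_lt_one (norm_nonneg z) hz)
  rw [norm_mul, norm_pow]
  exact mul_le_of_le_one_left (pow_nonneg (norm_nonneg z) m) (hφ _)

variable (φ : R →+* K) (hφ : ∀ c, ‖φ c‖ ≤ 1) {z : K} (hz : ‖z‖ < 1) [CompleteSpace K]

noncomputable def evalUnitDisc : R⟦X⟧ →+* K where
  toFun f := ∑' m, φ (coeff m f) * z ^ m
  map_one' := by
    rw [tsum_eq_single 0 fun m hm => by simp [coeff_one, hm]]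
    simp
  map_zero' := by simp
  map_add' f g := by
    simp only [map_add, add_mul]
    exact (summable_norm_map_coeff_mul_pow hφ hz f).of_norm.tsum_add
      (summable_norm_map_coeff_mul_pow hφ hz g).of_norm
  map_mul' f g := by
    rw [tsum_mul_tsum_eq_tsum_sum_antidiagonal_of_summable_norm
      (summable_norm_map_coeff_mul_pow hφ hz f) (summable_norm_map_coeff_mul_pow hφ hz g)]
    refine tsum_congr fun m => ?_
    rw [coeff_mul, map_sum, sum_mul]
    refine sum_congr rfl fun kl hkl => ?_
    rw [HasAntidiagonal.mem_antidiagonal] at hkl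
    rw [map_mul, ← hkl, pow_add]
    ring

theorem evalUnitDisc_apply (f : R⟦X⟧) :
    evalUnitDisc φ hφ hz f = ∑' m, φ (coeff m f) * z ^ m := rfl

@[simp]
theorem evalUnitDisc_C (r : R) : evalUnitDisc φ hφ hz (C r) = φ r := by
  rw [evalUnitDisc_apply, tsum_eq_single 0 fun m hm => by simp [coeff_C, hm]]
  simp

@[simp]
theorem evalUnitDisc_X : evalUnitDisc φ hφ hz X = z := by
  rw [evalUnitDisc_apply, tsum_eq_single 1 fun m hm => by simp [coeff_X, hm]]
  simp

end PowerSeries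

section Characters

variable {Γ K : Type*} [CommGroup Γ]

theorem finsum_monoidHom_units_apply [Finite Γ] [CommRing K] [IsDomain K]
    [HasEnoughRootsOfUnity K (Monoid.exponent Γ)] [DecidableEq Γ] (x : Γ) :
    ∑ᶠ χ : Γ →* Kˣ, (χ x : K) = if x = 1 then (Nat.card Γ : K) else 0 := by
  have := Fintype.ofFinite (Γ →* Kˣ)
  rw [finsum_eq_sum_of_fintype]
  split_ifs with hx
  · simp [hx, ← Nat.card_eq_fintype_card, CommGroup.card_monoidHom_of_hasEnoughRootsOfUnity]
  · obtain ⟨ψ, hψ⟩ := CommGroup.exists_apply_ne_one_of_hasEnoughRootsOfUnity Γ K hx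
    -- multiplying by `ψ` permutes the characters
    refine eq_zero_of_mul_eq_self_left (b := (ψ x : K)) (mt Units.val_eq_one.mp hψ) ?_
    rw [mul_sum]
    exact Fintype.sum_bijective _ (Group.mulLeft_bijective ψ) _ _ fun χ => by simp

variable [Field K] [HasEnoughRootsOfUnity K (Monoid.exponent Γ)]

theorem finsum_monoidHom_units_apply_mul_inv_apply [Finite Γ] [DecidableEq Γ] (x y : Γ) :
    ∑ᶠ χ : Γ →* Kˣ, (χ x : K) * (χ y : K)⁻¹ = if x = y then (Nat.card Γ : K) else 0 := by
  simp_rw [← Units.val_inv_eq_inv_val, ← Units.val_mul, ← map_inv, ← map_mul]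
  simp only [finsum_monoidHom_units_apply, mul_inv_eq_one]

theorem MonoidAlgebra.fourier_inversion [Fintype Γ] (hΓ : (Nat.card Γ : K) ≠ 0) {ι : Type*}
    (s : Finset ι) (c : ι → K) (γ : ι → Γ) :
    ∑ i ∈ s, c i • of K Γ (γ i) = ∑ δ : Γ, ((Nat.card Γ : K)⁻¹ *
      ∑ᶠ χ : Γ →* Kˣ, (∑ i ∈ s, c i * χ (γ i)) * (χ δ : K)⁻¹) • of K Γ δ := by
  classical
  have := Fintype.ofFinite (Γ →* Kˣ)
  have hcoeff : ∀ δ, (Nat.card Γ : K)⁻¹ *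
      ∑ᶠ χ : Γ →* Kˣ, (∑ i ∈ s, c i * χ (γ i)) * (χ δ : K)⁻¹ =
        ∑ i ∈ s, if γ i = δ then c i else 0 := fun δ => by
    simp_rw [finsum_eq_sum_of_fintype, sum_mul, mul_assoc]
    rw [sum_comm, mul_sum]
    refine sum_congr rfl fun i _ => ?_
    rw [← mul_sum, ← finsum_eq_sum_of_fintype, finsum_monoidHom_units_apply_mul_inv_apply]
    split_ifs
    · rw [mul_left_comm, inv_mul_cancel₀ hΓ, mul_one]
    · rw [mul_zero, mul_zero]
  simp_rw [hcoeff, sum_smul, ite_smul, zero_smul]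
  rw [sum_comm]
  exact sum_congr rfl fun i _ => by rw [sum_ite_eq, if_pos (mem_univ _)]

end Characters

section PadicAlgebra

variable {p : ℕ} [Fact p.Prime] {K : Type*} [NormedField K] [NormedAlgebra ℚ_[p] K]

theorem norm_natCast_prime_lt_one : ‖(p : K)‖ < 1 := by
  rw [← map_natCast (algebraMap ℚ_[p] K), norm_algebraMap']
  exact Padic.norm_p_lt_one

theorem norm_algebraMap_padicInt_le_one [Algebra ℤ_[p] K] [IsScalarTower ℤ_[p] ℚ_[p] K]
    (c : ℤ_[p]) : ‖algebraMap ℤ_[p] K c‖ ≤ 1 := by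
  rw [IsScalarTower.algebraMap_apply ℤ_[p] ℚ_[p] K, norm_algebraMap', PadicInt.algebraMap_apply,
    PadicInt.padic_norm_e_of_padicInt]
  exact c.norm_le_one

end PadicAlgebra

/-- Let `Γ` be cyclic of order `p^n` with generator `γ₀`, `g ∈ ℤ_p[[T]]`, and let
`ε_n` denote the image of `g` in `ℤ_p[Γ]` under `γ₀ ↦ 1+T` mod `(1+T)^(p^n) - 1`,
i.e. `ε_n = Σ_b a_b γ₀^b` where `g ≡ Σ_{b<p^n} a_b (1+T)^b mod ω_n`.  Then
`ε_n = Σ_γ [ (1/p^n) Σ_χ g(χ(γ₀)-1) χ̄(γ) ] γ`, the inner sum being over all characters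
`χ` of `Γ` with values in `K` (an algebraically closed complete field over `ℚ_p`,
containing the `p^n`-th roots of unity). -/
theorem stmt_11 (p n : ℕ) [Fact p.Prime] {Γ : Type*} [CommGroup Γ] [Fintype Γ]
    (γ0 : Γ) (hord : orderOf γ0 = p ^ n) (hgen : ∀ g : Γ, g ∈ Subgroup.zpowers γ0)
    {K : Type*} [NontriviallyNormedField K] [NormedAlgebra ℚ_[p] K] [CompleteSpace K]
    [Algebra ℤ_[p] K] [IsScalarTower ℤ_[p] ℚ_[p] K]
    (hroots : ∃ ξ : K, IsPrimitiveRoot ξ (p ^ n))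
    (g : PowerSeries ℤ_[p]) (a : ℕ → ℤ_[p]) (Q : PowerSeries ℤ_[p])
    (hg : g = (∑ b ∈ Finset.range (p ^ n),
          PowerSeries.C (R := ℤ_[p]) (a b) * (1 + PowerSeries.X) ^ b)
        + ((1 + PowerSeries.X) ^ (p ^ n) - 1) * Q) :
    (∑ b ∈ Finset.range (p ^ n),
        algebraMap ℤ_[p] K (a b) • MonoidAlgebra.of K Γ (γ0 ^ b))
      = ∑ γ : Γ,
          ((p ^ n : K)⁻¹ *
            ∑ᶠ χ : Γ →* Kˣ,
              (∑' m : ℕ,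
                algebraMap ℤ_[p] K (PowerSeries.coeff (R := ℤ_[p]) m g) * ((χ γ0 : K) - 1) ^ m) *
                ((χ γ : K))⁻¹) • MonoidAlgebra.of K Γ γ := by
  have hp : p.Prime := Fact.out
  have : IsUltrametricDist K := IsUltrametricDist.of_normedAlgebra ℚ_[p]
  have : CharZero K := charZero_of_injective_algebraMap (algebraMap ℚ_[p] K).injective
  have : NeZero (p ^ n) := ⟨(pow_pos hp.pos n).ne'⟩
  have hcard : Nat.card Γ = p ^ n := hord ▸ (orderOf_eq_card_of_forall_mem_zpowers hgen).symm
  have : HasEnoughRootsOfUnity K (p ^ n) := ⟨hroots, inferInstance⟩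
  have : HasEnoughRootsOfUnity K (Monoid.exponent Γ) :=
    .of_dvd K (hcard ▸ Group.exponent_dvd_nat_card)
  have hχ (χ : Γ →* Kˣ) : ∑' m : ℕ,
      algebraMap ℤ_[p] K (PowerSeries.coeff m g) * ((χ γ0 : K) - 1) ^ m =
        ∑ b ∈ Finset.range (p ^ n), algebraMap ℤ_[p] K (a b) * (χ (γ0 ^ b) : K) := by
    have hroot : (χ γ0 : K) ^ p ^ n = 1 := by
      rw [← Units.val_pow_eq_pow_val, ← map_pow, ← hord, pow_orderOf_eq_one, map_one,
        Units.val_one]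
    have hz := norm_sub_one_lt_one_of_pow_prime_pow_eq_one hp norm_natCast_prime_lt_one hroot
    rw [← PowerSeries.evalUnitDisc_apply _ norm_algebraMap_padicInt_le_one hz, hg]
    simp [hroot]
  have inversion := MonoidAlgebra.fourier_inversion (Nat.cast_ne_zero.mpr Nat.card_pos.ne')
    (Finset.range (p ^ n)) (fun b => algebraMap ℤ_[p] K (a b)) (γ0 ^ ·)
  rw [hcard, Nat.cast_pow] at inversion
  simp_rw [hχ]
  exact inversion
end

section
/- Let p ≥ 5 be prime and let P(X) = Σ_{k=1}^{p-1} (-1)^k (C(p,k)/p) ω(k) X^k ∈ Z_p[X], where ω: (Z/pZ)^× → Z_p^× is the Teichmüller character. Then there exists a (p-1)-th root of unity α ∈ Z_p^× with α ≠ ±1 such that P(α) ≢ 0 (mod p²). -/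
open Finset

section Aux

variable {p : ℕ} [Fact p.Prime]

private lemma aux_sum_omega_pow (ω : (ZMod p)ˣ →* ℤ_[p]ˣ)
    (hω : ∀ a : (ZMod p)ˣ, PadicInt.toZMod ((ω a : ℤ_[p]ˣ) : ℤ_[p]) = (a : ZMod p))
    {j : ℕ} (hj : ¬ (p - 1) ∣ j) :
    ∑ c : (ZMod p)ˣ, ((ω c : ℤ_[p]ˣ) : ℤ_[p]) ^ j = 0 := by
  obtain ⟨g, hg⟩ := IsCyclic.exists_generator (α := (ZMod p)ˣ)
  have hcard : Fintype.card (ZMod p)ˣ = p - 1 := by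
    rw [ZMod.card_units_eq_totient, Nat.totient_prime Fact.out]
  have hord : orderOf g = p - 1 := by
    rw [orderOf_eq_card_of_forall_mem_zpowers hg, Nat.card_eq_fintype_card, hcard]
  have hgj : g ^ j ≠ 1 := by
    intro h; exact hj (hord ▸ orderOf_dvd_of_pow_eq_one h)
  have hne : ((ω g : ℤ_[p]ˣ) : ℤ_[p]) ^ j ≠ 1 := by
    intro h
    apply hgj
    have h2 : ((ω (g ^ j) : ℤ_[p]ˣ) : ℤ_[p]) = 1 := by
      rw [map_pow]; push_cast; exact h
    have := hω (g ^ j)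
    rw [h2, map_one] at this
    ext
    exact this.symm
  have hre : ∑ c : (ZMod p)ˣ, ((ω (g * c) : ℤ_[p]ˣ) : ℤ_[p]) ^ j
      = ∑ c : (ZMod p)ˣ, ((ω c : ℤ_[p]ˣ) : ℤ_[p]) ^ j :=
    Equiv.sum_comp (Equiv.mulLeft g) (fun c => ((ω c : ℤ_[p]ˣ) : ℤ_[p]) ^ j)
  have hre2 : ∀ c : (ZMod p)ˣ, ((ω (g * c) : ℤ_[p]ˣ) : ℤ_[p]) ^ j
      = ((ω g : ℤ_[p]ˣ) : ℤ_[p]) ^ j * ((ω c : ℤ_[p]ˣ) : ℤ_[p]) ^ j := by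
    intro c; rw [map_mul]; push_cast; ring
  simp only [hre2, ← Finset.mul_sum] at hre
  have h0 := sub_eq_zero.mpr hre
  rw [← sub_one_mul] at h0
  rcases mul_eq_zero.mp h0 with h | h
  · exact absurd (sub_eq_zero.mp h) hne
  · exact h

private lemma aux_root (ω : (ZMod p)ˣ →* ℤ_[p]ˣ) (c : (ZMod p)ˣ) :
    ((ω c : ℤ_[p]ˣ) : ℤ_[p]) ^ (p - 1) = 1 := by
  have hcard : Fintype.card (ZMod p)ˣ = p - 1 := by
    rw [ZMod.card_units_eq_totient, Nat.totient_prime Fact.out]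
  have h1 : c ^ (p - 1) = 1 := by rw [← hcard]; exact pow_card_eq_one
  have : ((ω (c ^ (p - 1)) : ℤ_[p]ˣ) : ℤ_[p]) = 1 := by rw [h1, map_one]; rfl
  rw [map_pow] at this
  push_cast at this
  exact this

/-- the summand coefficient -/
private noncomputable def Tfn (p : ℕ) [Fact p.Prime] (ω : (ZMod p)ˣ →* ℤ_[p]ˣ)
    (a : (ZMod p)ˣ) : ℤ_[p] :=
  (-1 : ℤ_[p]) ^ ((a : ZMod p).val) *
    ((Nat.choose p ((a : ZMod p).val) / p : ℕ) : ℤ_[p]) * ((ω a : ℤ_[p]ˣ) : ℤ_[p])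

/-- the series -/
private noncomputable def Sfn (p : ℕ) [Fact p.Prime] (ω : (ZMod p)ˣ →* ℤ_[p]ˣ)
    (α : ℤ_[p]) : ℤ_[p] :=
  ∑ a : (ZMod p)ˣ, Tfn p ω a * α ^ ((a : ZMod p).val)

private lemma aux_U (hp5 : 5 ≤ p) (ω : (ZMod p)ˣ →* ℤ_[p]ˣ)
    (hω : ∀ a : (ZMod p)ˣ, PadicInt.toZMod ((ω a : ℤ_[p]ˣ) : ℤ_[p]) = (a : ZMod p))
    (m : (ZMod p)ˣ) :
    ∑ c : (ZMod p)ˣ, ((ω c : ℤ_[p]ˣ) : ℤ_[p]) ^ (p - 1 - (m : ZMod p).val)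
        * Sfn p ω ((ω c : ℤ_[p]ˣ) : ℤ_[p])
      = ((p - 1 : ℕ) : ℤ_[p]) * Tfn p ω m := by
  set e : ℕ := p - 1 - (m : ZMod p).val with he
  have hcard : Fintype.card (ZMod p)ˣ = p - 1 := by
    rw [ZMod.card_units_eq_totient, Nat.totient_prime Fact.out]
  have hvm1 : 1 ≤ (m : ZMod p).val := by
    rcases Nat.eq_zero_or_pos ((m : ZMod p).val) with h | h
    · exact absurd ((ZMod.val_eq_zero _).mp h) m.ne_zero
    · exact h
  have hvm2 : (m : ZMod p).val < p := ZMod.val_lt _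
  have step1 : ∀ c : (ZMod p)ˣ,
      ((ω c : ℤ_[p]ˣ) : ℤ_[p]) ^ e * Sfn p ω ((ω c : ℤ_[p]ˣ) : ℤ_[p])
        = ∑ a : (ZMod p)ˣ, Tfn p ω a * ((ω c : ℤ_[p]ˣ) : ℤ_[p]) ^ ((a : ZMod p).val + e) := by
    intro c
    unfold Sfn
    rw [Finset.mul_sum]
    exact Finset.sum_congr rfl fun a _ => by rw [pow_add]; ring
  simp only [step1]
  rw [Finset.sum_comm]
  have inner : ∀ a : (ZMod p)ˣ,
      (∑ c : (ZMod p)ˣ, ((ω c : ℤ_[p]ˣ) : ℤ_[p]) ^ ((a : ZMod p).val + e))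
        = if a = m then ((p - 1 : ℕ) : ℤ_[p]) else 0 := by
    intro a
    by_cases ha : a = m
    · subst ha
      have hexp : (a : ZMod p).val + e = p - 1 := by rw [he]; omega
      rw [hexp]
      simp only [aux_root ω]
      simp [Finset.card_univ, hcard]
    · rw [if_neg ha]
      apply aux_sum_omega_pow ω hω
      intro hdvd
      apply ha
      have hva1 : 1 ≤ (a : ZMod p).val := by
        rcases Nat.eq_zero_or_pos ((a : ZMod p).val) with h | h
        · exact absurd ((ZMod.val_eq_zero _).mp h) a.ne_zero
        · exact h
      have hva2 : (a : ZMod p).val < p := ZMod.val_lt _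
      have hveq : (a : ZMod p).val = (m : ZMod p).val := by
        rcases hdvd with ⟨k, hk⟩
        have h2 : k ≠ 0 := by rintro rfl; omega
        have h3 : k < 2 := by
          by_contra hge
          have h4 : (p - 1) * 2 ≤ (p - 1) * k :=
            Nat.mul_le_mul_left _ (not_lt.mp hge)
          omega
        have hk1 : k = 1 := by omega
        subst hk1
        omega
      exact Units.ext (ZMod.val_injective p hveq)
  calc ∑ a : (ZMod p)ˣ, ∑ c : (ZMod p)ˣ,
        Tfn p ω a * ((ω c : ℤ_[p]ˣ) : ℤ_[p]) ^ ((a : ZMod p).val + e)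
      = ∑ a : (ZMod p)ˣ, Tfn p ω a *
          ∑ c : (ZMod p)ˣ, ((ω c : ℤ_[p]ˣ) : ℤ_[p]) ^ ((a : ZMod p).val + e) := by
        exact Finset.sum_congr rfl fun a _ => (Finset.mul_sum _ _ _).symm
    _ = ∑ a : (ZMod p)ˣ, Tfn p ω a * (if a = m then ((p - 1 : ℕ) : ℤ_[p]) else 0) := by
        exact Finset.sum_congr rfl fun a _ => by rw [inner a]
    _ = ((p - 1 : ℕ) : ℤ_[p]) * Tfn p ω m := by
        simp only [mul_ite, mul_zero, Finset.sum_ite_eq', Finset.mem_univ, if_true]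
        ring

end Aux

/-- For a prime `p ≥ 5` and the Teichmüller character `ω`, there is a `(p-1)`-th root of
unity `α ∈ ℤ_p^×`, `α ≠ ±1`, such that
`P(α) = Σ_{k=1}^{p-1} (-1)^k (C(p,k)/p) ω(k) α^k ≢ 0 (mod p²)`. -/
theorem stmt_16 (p : ℕ) [Fact p.Prime] (hp5 : 5 ≤ p)
    (ω : (ZMod p)ˣ →* ℤ_[p]ˣ)
    (hω : ∀ a : (ZMod p)ˣ, PadicInt.toZMod ((ω a : ℤ_[p]ˣ) : ℤ_[p]) = (a : ZMod p)) :
    ∃ α : ℤ_[p], α ^ (p - 1) = 1 ∧ α ≠ 1 ∧ α ≠ -1 ∧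
      ¬ ((p : ℤ_[p]) ^ 2 ∣
        ∑ a : (ZMod p)ˣ,
          (-1 : ℤ_[p]) ^ ((a : ZMod p).val) *
            ((Nat.choose p ((a : ZMod p).val) / p : ℕ) : ℤ_[p]) *
            ((ω a : ℤ_[p]ˣ) : ℤ_[p]) * α ^ ((a : ZMod p).val)) := by
  by_contra hcon
  push_neg at hcon
  haveI h2p : Fact (2 < p) := ⟨by omega⟩
  have h : ∀ α : ℤ_[p], α ^ (p - 1) = 1 → α ≠ 1 → α ≠ -1 →
      (p : ℤ_[p]) ^ 2 ∣ Sfn p ω α := hcon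
  -- basic facts about ω
  have hW1 : ((ω 1 : ℤ_[p]ˣ) : ℤ_[p]) = 1 := by rw [map_one]; rfl
  have hWneg1 : ((ω (-1) : ℤ_[p]ˣ) : ℤ_[p]) = -1 := by
    have hsq : ((ω (-1) : ℤ_[p]ˣ) : ℤ_[p]) * ((ω (-1) : ℤ_[p]ˣ) : ℤ_[p]) = 1 := by
      have : ((-1 : (ZMod p)ˣ) * (-1)) = 1 := by rw [neg_one_mul, neg_neg]
      calc ((ω (-1) : ℤ_[p]ˣ) : ℤ_[p]) * ((ω (-1) : ℤ_[p]ˣ) : ℤ_[p])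
          = ((ω ((-1) * (-1)) : ℤ_[p]ˣ) : ℤ_[p]) := by rw [map_mul]; push_cast; ring
        _ = 1 := by rw [this, map_one]; rfl
    rcases mul_self_eq_one_iff.mp hsq with h1 | h1
    · exfalso
      have := hω (-1)
      rw [h1, map_one] at this
      have hcoe : ((-1 : (ZMod p)ˣ) : ZMod p) = -1 := by
        rw [Units.val_neg, Units.val_one]
      rw [hcoe] at this
      exact ZMod.neg_one_ne_one this.symm
    · exact h1
  have hWne : ∀ c : (ZMod p)ˣ, c ≠ 1 → c ≠ -1 →
      ((ω c : ℤ_[p]ˣ) : ℤ_[p]) ≠ 1 ∧ ((ω c : ℤ_[p]ˣ) : ℤ_[p]) ≠ -1 := by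
    intro c hc1 hc2
    constructor
    · intro hval
      apply hc1
      have := hω c
      rw [hval, map_one] at this
      exact Units.ext this.symm
    · intro hval
      apply hc2
      have := hω c
      rw [hval, map_neg, map_one] at this
      have hcoe : ((-1 : (ZMod p)ˣ) : ZMod p) = -1 := by
        rw [Units.val_neg, Units.val_one]
      exact Units.ext (by rw [hcoe]; exact this.symm)
  -- the split lemma
  have hEvenp1 : Even (p - 1) :=
    Nat.Odd.sub_odd (Nat.Prime.odd_of_ne_two Fact.out (by omega)) odd_one
  have hne11 : (1 : (ZMod p)ˣ) ≠ -1 := by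
    intro hcontr
    apply ZMod.neg_one_ne_one (n := p)
    have := congrArg (Units.val) hcontr
    rw [Units.val_one, Units.val_neg, Units.val_one] at this
    exact this.symm
  have hsplit : ∀ e : ℕ, Even e →
      (p : ℤ_[p]) ^ 2 ∣
        (∑ c : (ZMod p)ˣ, ((ω c : ℤ_[p]ˣ) : ℤ_[p]) ^ e * Sfn p ω ((ω c : ℤ_[p]ˣ) : ℤ_[p]))
          - (Sfn p ω 1 + Sfn p ω (-1)) := by
    intro e he
    have hsub : ({1, -1} : Finset (ZMod p)ˣ) ⊆ Finset.univ := Finset.subset_univ _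
    rw [← Finset.sum_sdiff hsub]
    have hpair : ∑ c ∈ ({1, -1} : Finset (ZMod p)ˣ),
        ((ω c : ℤ_[p]ˣ) : ℤ_[p]) ^ e * Sfn p ω ((ω c : ℤ_[p]ˣ) : ℤ_[p])
          = Sfn p ω 1 + Sfn p ω (-1) := by
      rw [Finset.sum_pair hne11, hW1, hWneg1, one_pow, he.neg_one_pow, one_mul, one_mul]
    rw [hpair, add_sub_cancel_right]
    apply Finset.dvd_sum
    intro c hc
    rw [Finset.mem_sdiff, Finset.mem_insert, Finset.mem_singleton] at hc
    push_neg at hc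
    obtain ⟨hc1, hc2⟩ := hc.2
    obtain ⟨hn1, hn2⟩ := hWne c hc1 hc2
    exact Dvd.dvd.mul_left (h _ (aux_root ω c) hn1 hn2) _
  -- main relation
  have hrel : ∀ m : (ZMod p)ˣ, Even ((m : ZMod p).val) →
      (p : ℤ_[p]) ^ 2 ∣ ((p - 1 : ℕ) : ℤ_[p]) * Tfn p ω m - (Sfn p ω 1 + Sfn p ω (-1)) := by
    intro m hm
    have he : Even (p - 1 - (m : ZMod p).val) := by
      rw [Nat.even_iff] at hEvenp1 hm ⊢
      have := ZMod.val_lt (m : ZMod p)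
      omega
    have := hsplit _ he
    rwa [aux_U hp5 ω hω m] at this
  -- unit cancellation
  have hPprime : Prime (p : ℤ_[p]) := PadicInt.prime_p
  have hunit : IsUnit ((p - 1 : ℕ) : ℤ_[p]) := by
    by_contra hnu
    have hmem : ((p - 1 : ℕ) : ℤ_[p]) ∈ IsLocalRing.maximalIdeal ℤ_[p] := hnu
    rw [PadicInt.maximalIdeal_eq_span_p, Ideal.mem_span_singleton] at hmem
    have hcast : ((p - 1 : ℕ) : ℤ_[p]) = (p : ℤ_[p]) - 1 := by
      rw [Nat.cast_sub (by omega)]; norm_num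
    have hone : (p : ℤ_[p]) ∣ 1 := by
      have := dvd_sub (dvd_refl (p : ℤ_[p])) hmem
      rw [hcast] at this
      simpa using this
    exact hPprime.not_unit (isUnit_of_dvd_one hone)
  have hcancel : ∀ t : ℤ_[p],
      (p : ℤ_[p]) ^ 2 ∣ ((p - 1 : ℕ) : ℤ_[p]) * t → (p : ℤ_[p]) ^ 2 ∣ t := by
    intro t ht
    obtain ⟨u, hu⟩ := hunit
    rcases ht with ⟨s, hs⟩
    refine ⟨(↑u⁻¹ : ℤ_[p]) * s, ?_⟩
    have : t = (↑u⁻¹ : ℤ_[p]) * (((p - 1 : ℕ) : ℤ_[p]) * t) := by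
      rw [← hu, ← mul_assoc, Units.inv_mul, one_mul]
    rw [this, hs]; ring
  -- the three units
  have hcop2 : Nat.Coprime 2 p := (Nat.coprime_primes Nat.prime_two Fact.out).mpr (by omega)
  set u2 : (ZMod p)ˣ := ZMod.unitOfCoprime 2 hcop2 with hu2def
  have hu2coe : ((u2 : ZMod p)) = ((2 : ℕ) : ZMod p) := ZMod.coe_unitOfCoprime 2 hcop2
  have hu2val : (u2 : ZMod p).val = 2 := by
    rw [hu2coe, ZMod.val_natCast, Nat.mod_eq_of_lt (by omega)]
  have hu4coe : ((u2 * u2 : (ZMod p)ˣ) : ZMod p) = ((4 : ℕ) : ZMod p) := by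
    rw [Units.val_mul, hu2coe]
    push_cast
    ring
  have hu4val : ((u2 * u2 : (ZMod p)ˣ) : ZMod p).val = 4 := by
    rw [hu4coe, ZMod.val_natCast, Nat.mod_eq_of_lt (by omega)]
  have hnegval : ((-1 : (ZMod p)ˣ) : ZMod p).val = p - 1 := by
    have hcoe : ((-1 : (ZMod p)ˣ) : ZMod p) = -1 := by rw [Units.val_neg, Units.val_one]
    have hval : (-1 : ZMod p) = ((p - 1 : ℕ) : ZMod p) := by
      rw [Nat.cast_sub (by omega : 1 ≤ p), ZMod.natCast_self, Nat.cast_one, zero_sub]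
    rw [hcoe, hval, ZMod.val_natCast, Nat.mod_eq_of_lt (by omega)]
  set x : ℤ_[p] := ((ω u2 : ℤ_[p]ˣ) : ℤ_[p]) with hxdef
  set c2 : ℕ := p.choose 2 / p with hc2def
  set c4 : ℕ := p.choose 4 / p with hc4def
  -- values of Tfn
  have hT2 : Tfn p ω u2 = (c2 : ℤ_[p]) * x := by
    unfold Tfn
    rw [hu2val]
    norm_num
    rfl
  have hT4 : Tfn p ω (u2 * u2) = (c4 : ℤ_[p]) * (x * x) := by
    unfold Tfn
    rw [hu4val, map_mul]
    push_cast
    ring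
  have hTneg : Tfn p ω (-1) = -1 := by
    unfold Tfn
    rw [hnegval, hWneg1, hEvenp1.neg_one_pow]
    have hch : p.choose (p - 1) = p := by
      have h1 : p.choose (p - (p - 1)) = p.choose (p - 1) := Nat.choose_symm (by omega)
      have h2 : p - (p - 1) = 1 := by omega
      rw [h2, Nat.choose_one_right] at h1
      exact h1.symm
    rw [hch, Nat.div_self (by omega)]
    norm_num
  -- the two congruences
  have hA : (p : ℤ_[p]) ^ 2 ∣ (c2 : ℤ_[p]) * x + 1 := by
    apply hcancel
    have d1 := dvd_sub (hrel u2 (by rw [hu2val]; exact even_two))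
      (hrel (-1) (by rw [hnegval]; exact hEvenp1))
    have heq : (((p - 1 : ℕ) : ℤ_[p]) * Tfn p ω u2 - (Sfn p ω 1 + Sfn p ω (-1)))
        - (((p - 1 : ℕ) : ℤ_[p]) * Tfn p ω (-1) - (Sfn p ω 1 + Sfn p ω (-1)))
        = ((p - 1 : ℕ) : ℤ_[p]) * ((c2 : ℤ_[p]) * x + 1) := by
      rw [hT2, hTneg]; ring
    rwa [heq] at d1
  have hB : (p : ℤ_[p]) ^ 2 ∣ (c4 : ℤ_[p]) * (x * x) + 1 := by
    apply hcancel
    have d1 := dvd_sub (hrel (u2 * u2) (by rw [hu4val]; decide))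
      (hrel (-1) (by rw [hnegval]; exact hEvenp1))
    have heq : (((p - 1 : ℕ) : ℤ_[p]) * Tfn p ω (u2 * u2) - (Sfn p ω 1 + Sfn p ω (-1)))
        - (((p - 1 : ℕ) : ℤ_[p]) * Tfn p ω (-1) - (Sfn p ω 1 + Sfn p ω (-1)))
        = ((p - 1 : ℕ) : ℤ_[p]) * ((c4 : ℤ_[p]) * (x * x) + 1) := by
      rw [hT4, hTneg]; ring
    rwa [heq] at d1
  -- arithmetic identities on c2, c4
  have hpd2 : p ∣ p.choose 2 := Nat.Prime.dvd_choose_self Fact.out (by norm_num) (by omega)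
  have hpd4 : p ∣ p.choose 4 := Nat.Prime.dvd_choose_self Fact.out (by norm_num) (by omega)
  have hc2p : c2 * p = p.choose 2 := Nat.div_mul_cancel hpd2
  have hc4p : c4 * p = p.choose 4 := Nat.div_mul_cancel hpd4
  have h2c2 : 2 * c2 = p - 1 := by
    have h1 : p.choose 2 * 2 = p * (p - 1) := by
      rw [Nat.choose_two_right]
      apply Nat.div_mul_cancel
      rcases hEvenp1 with ⟨k, hk⟩
      exact ⟨p * k, by rw [hk]; ring⟩
    have h2 : p * (2 * c2) = p * (p - 1) := by
      calc p * (2 * c2) = (c2 * p) * 2 := by ring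
        _ = p.choose 2 * 2 := by rw [hc2p]
        _ = p * (p - 1) := h1
    exact Nat.eq_of_mul_eq_mul_left (by omega) h2
  have h24c4 : 24 * c4 = (p - 1) * (p - 2) * (p - 3) := by
    have hdesc : p.descFactorial 4 = p * ((p - 1) * (p - 2) * (p - 3)) := by
      simp only [Nat.descFactorial_succ, Nat.descFactorial_zero, mul_one, Nat.sub_zero]
      ring
    have h1 : p.choose 4 * 24 = p * ((p - 1) * (p - 2) * (p - 3)) := by
      rw [Nat.choose_eq_descFactorial_div_factorial]
      have h24 : (Nat.factorial 4) = 24 := by decide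
      rw [← h24, Nat.div_mul_cancel (Nat.factorial_dvd_descFactorial p 4), ← hdesc]
    have h2 : p * (24 * c4) = p * ((p - 1) * (p - 2) * (p - 3)) := by
      calc p * (24 * c4) = (c4 * p) * 24 := by ring
        _ = p.choose 4 * 24 := by rw [hc4p]
        _ = _ := h1
    exact Nat.eq_of_mul_eq_mul_left (by omega) h2
  -- cast identities
  have hcast2 : 2 * (c2 : ℤ_[p]) = (p : ℤ_[p]) - 1 := by
    have := congrArg (fun n : ℕ => (n : ℤ_[p])) h2c2
    push_cast at this
    rw [this, Nat.cast_sub (by omega)]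
    norm_num
  have hcast4 : 24 * (c4 : ℤ_[p]) = ((p : ℤ_[p]) - 1) * ((p : ℤ_[p]) - 2) * ((p : ℤ_[p]) - 3) := by
    have := congrArg (fun n : ℕ => (n : ℤ_[p])) h24c4
    push_cast at this
    rw [this, Nat.cast_sub (show 1 ≤ p by omega), Nat.cast_sub (show 2 ≤ p by omega),
      Nat.cast_sub (show 3 ≤ p by omega)]
    norm_num
  -- derive p^2 ∣ c2^2 + c4
  have hstep1 : (p : ℤ_[p]) ^ 2 ∣ (c2 : ℤ_[p]) * x * ((c2 : ℤ_[p]) * x) - 1 := by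
    have := Dvd.dvd.mul_right hA ((c2 : ℤ_[p]) * x - 1)
    have heq : ((c2 : ℤ_[p]) * x + 1) * ((c2 : ℤ_[p]) * x - 1)
        = (c2 : ℤ_[p]) * x * ((c2 : ℤ_[p]) * x) - 1 := by ring
    rwa [heq] at this
  have hstep2 : (p : ℤ_[p]) ^ 2 ∣ (c2 : ℤ_[p]) * (c2 : ℤ_[p]) + (c4 : ℤ_[p]) := by
    have d1 := Dvd.dvd.mul_left hB ((c2 : ℤ_[p]) * (c2 : ℤ_[p]))
    have d2 := Dvd.dvd.mul_left hstep1 (c4 : ℤ_[p])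
    have d3 := dvd_sub d1 d2
    have heq : (c2 : ℤ_[p]) * (c2 : ℤ_[p]) * ((c4 : ℤ_[p]) * (x * x) + 1)
        - (c4 : ℤ_[p]) * ((c2 : ℤ_[p]) * x * ((c2 : ℤ_[p]) * x) - 1)
        = (c2 : ℤ_[p]) * (c2 : ℤ_[p]) + (c4 : ℤ_[p]) := by ring
    rwa [heq] at d3
  -- final contradiction
  have hkey : (p : ℤ_[p]) ^ 2 ∣ (p : ℤ_[p]) ^ 3 - (p : ℤ_[p]) := by
    have d1 := Dvd.dvd.mul_left hstep2 (24 : ℤ_[p])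
    have heq : (24 : ℤ_[p]) * ((c2 : ℤ_[p]) * (c2 : ℤ_[p]) + (c4 : ℤ_[p]))
        = 6 * (2 * (c2 : ℤ_[p])) * (2 * (c2 : ℤ_[p])) + 24 * (c4 : ℤ_[p]) := by ring
    rw [heq, hcast2, hcast4] at d1
    have heq2 : 6 * ((p : ℤ_[p]) - 1) * ((p : ℤ_[p]) - 1)
        + ((p : ℤ_[p]) - 1) * ((p : ℤ_[p]) - 2) * ((p : ℤ_[p]) - 3)
        = (p : ℤ_[p]) ^ 3 - (p : ℤ_[p]) := by ring
    rwa [heq2] at d1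
  have hPne : (p : ℤ_[p]) ≠ 0 := hPprime.ne_zero
  rcases hkey with ⟨s, hs⟩
  have hs2 : (p : ℤ_[p]) * ((p : ℤ_[p]) ^ 2 - 1) = (p : ℤ_[p]) * ((p : ℤ_[p]) * s) := by
    have he : (p : ℤ_[p]) * ((p : ℤ_[p]) ^ 2 - 1) = (p : ℤ_[p]) ^ 3 - (p : ℤ_[p]) := by ring
    rw [he, hs]; ring
  have hs3 : (p : ℤ_[p]) ^ 2 - 1 = (p : ℤ_[p]) * s := mul_left_cancel₀ hPne hs2
  have hd1 : (p : ℤ_[p]) ∣ 1 := by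
    have := dvd_sub (dvd_pow_self (p : ℤ_[p]) (two_ne_zero)) ⟨s, hs3⟩
    simpa using this
  exact hPprime.not_unit (isUnit_of_dvd_one hd1)
end

section
/- Let p be an odd prime, n ≥ 0, ζ_{p^(d+1)} compatible primitive p^(d+1)-th roots of unity in ℚ_p-bar (ζ_{p^(d+1)}^p = ζ_{p^d}), π_n = ζ_{p^(n+1)} - 1. Then 1/π_n = (1/p^(n+1)) Σ_{a=1, p∤a}^{p^(n+1)} a·ζ_{p^(n+1)}^a + (1/p^n) Σ_{k=1}^{p^n - 1} k·ζ_{p^n}^k, where by convention the second sum is 1/π_{n-1} for n ≥ 1. -/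
/-!
For a primitive `m`-th root of unity `ζ ≠ 1`, telescoping gives
`(ζ - 1) ∑_{k<m} k ζ^k = m ζ^m - ζ ∑_{k<m} ζ^k = m`, so `(ζ - 1)⁻¹ = m⁻¹ ∑_{k<m} k ζ^k`.
For `m = p^(n+1)` split this sum according to whether `p ∣ k`: the terms `k = p b` contribute
`p ∑_{b<p^n} b (ζ^p)^b`, which is the same expression one level down.
-/

open Finset

theorem sub_one_mul_sum_range_mul_pow {R : Type*} [CommRing R] (x : R) (m : ℕ) :
    (x - 1) * ∑ k ∈ range m, (k : R) * x ^ k = m * x ^ m - x * ∑ k ∈ range m, x ^ k := by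
  induction m with
  | zero => simp
  | succ m ih =>
    rw [sum_range_succ, sum_range_succ, mul_add, ih]
    push_cast
    ring

theorem IsPrimitiveRoot.sub_one_mul_sum_range_mul_pow {R : Type*} [CommRing R] [IsDomain R]
    {ζ : R} {m : ℕ} (hζ : IsPrimitiveRoot ζ m) (hm : 1 < m) :
    (ζ - 1) * ∑ k ∈ range m, (k : R) * ζ ^ k = m := by
  rw [_root_.sub_one_mul_sum_range_mul_pow, hζ.pow_eq_one, hζ.geom_sum_eq_zero hm, mul_one,
    mul_zero, sub_zero]

theorem IsPrimitiveRoot.inv_sub_one_eq_inv_mul_sum {K : Type*} [Field K] {ζ : K} {m : ℕ}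
    (hζ : IsPrimitiveRoot ζ m) (hm : 1 < m) :
    (ζ - 1)⁻¹ = (m : K)⁻¹ * ∑ k ∈ range m, (k : K) * ζ ^ k := by
  have : NeZero m := ⟨by omega⟩
  have hmK : (m : K) ≠ 0 := hζ.neZero'.out
  have hζ1 : ζ - 1 ≠ 0 := sub_ne_zero.2 (hζ.ne_one hm)
  rw [eq_comm, inv_mul_eq_iff_eq_mul₀ hmK, ← hζ.sub_one_mul_sum_range_mul_pow hm,
    mul_comm (ζ - 1), mul_assoc, mul_inv_cancel₀ hζ1, mul_one]

theorem Finset.sum_filter_dvd_range_mul {M : Type*} [AddCommMonoid M] (f : ℕ → M) {p : ℕ}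
    (hp : 0 < p) (q : ℕ) :
    ∑ a ∈ (range (p * q)).filter (p ∣ ·), f a = ∑ b ∈ range q, f (p * b) := by
  symm
  refine sum_nbij' (p * ·) (· / p) ?_ ?_ ?_ ?_ (fun _ _ => rfl) <;>
    simp only [mem_range, mem_filter]
  · exact fun b hb => ⟨by nlinarith, dvd_mul_right p b⟩
  · exact fun a ha => Nat.div_lt_of_lt_mul ha.1
  · exact fun b _ => by simp [hp.ne']
  · exact fun a ha => Nat.mul_div_cancel' ha.2

theorem Finset.filter_not_dvd_Icc_one_eq_range {p m : ℕ} (hpm : p ∣ m) :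
    (Icc 1 m).filter (¬ p ∣ ·) = (range m).filter (¬ p ∣ ·) := by
  ext a
  simp only [mem_filter, mem_Icc, mem_range]
  constructor
  · rintro ⟨⟨-, ha⟩, hpa⟩
    exact ⟨ha.lt_of_ne (by rintro rfl; exact hpa hpm), hpa⟩
  · rintro ⟨ha, hpa⟩
    exact ⟨⟨Nat.one_le_iff_ne_zero.2 (by rintro rfl; exact hpa (dvd_zero p)), ha.le⟩, hpa⟩

theorem Finset.sum_Icc_one_sub_one_eq_sum_range {M : Type*} [AddCommMonoid M] {f : ℕ → M}
    (hf : f 0 = 0) (N : ℕ) : ∑ k ∈ Icc 1 (N - 1), f k = ∑ k ∈ range N, f k := by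
  rcases eq_or_ne N 0 with rfl | hN
  · simp
  · rw [Nat.range_eq_Icc_zero_sub_one N hN, Icc_eq_cons_Ioc (Nat.zero_le _), sum_cons, hf,
      zero_add, ← Icc_add_one_left_eq_Ioc, zero_add]

theorem stmt_17_general {K : Type*} [Field K] (p n : ℕ) (hp : p.Prime)
    (ζ : K) (hζ : IsPrimitiveRoot ζ (p ^ (n + 1))) :
    (ζ - 1)⁻¹ =
      (p ^ (n + 1) : K)⁻¹ *
          ∑ a ∈ (Finset.Icc 1 (p ^ (n + 1))).filter (fun a => ¬ p ∣ a), (a : K) * ζ ^ a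
        + (p ^ n : K)⁻¹ * ∑ k ∈ Finset.Icc 1 (p ^ n - 1), (k : K) * (ζ ^ p) ^ k := by
  have hm : 1 < p ^ (n + 1) := Nat.one_lt_pow n.succ_ne_zero hp.one_lt
  have : NeZero (p ^ (n + 1)) := ⟨by omega⟩
  have hpK : (p : K) ≠ 0 := by
    simpa [Nat.cast_pow, n.succ_ne_zero] using hζ.neZero'.out
  rw [filter_not_dvd_Icc_one_eq_range (dvd_pow_self p n.succ_ne_zero),
    sum_Icc_one_sub_one_eq_sum_range (f := fun k => (k : K) * (ζ ^ p) ^ k) (by simp),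
    hζ.inv_sub_one_eq_inv_mul_sum hm, ← sum_filter_not_add_sum_filter (range _) (p ∣ ·),
    pow_succ' p n, sum_filter_dvd_range_mul _ hp.pos]
  push_cast
  rw [pow_succ', mul_add]
  congr 1
  rw [mul_sum, mul_sum]
  refine sum_congr rfl fun b _ => ?_
  rw [← pow_mul]
  field_simp

/-- For an odd prime `p` and a primitive `p^(n+1)`-th root of unity `ζ` in a field of
characteristic zero, with `π_n = ζ - 1` and `ζ_{p^n} = ζ^p`, we have
`1/π_n = (1/p^(n+1)) Σ_{1 ≤ a ≤ p^(n+1), p∤a} a·ζ^a + (1/p^n) Σ_{k=1}^{p^n-1} k·(ζ^p)^k`. -/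
theorem stmt_17 {K : Type*} [Field K] [CharZero K] (p n : ℕ) (hp : p.Prime) (hodd : Odd p)
    (ζ : K) (hζ : IsPrimitiveRoot ζ (p ^ (n + 1))) :
    (ζ - 1)⁻¹ =
      (p ^ (n + 1) : K)⁻¹ *
          ∑ a ∈ (Finset.Icc 1 (p ^ (n + 1))).filter (fun a => ¬ p ∣ a), (a : K) * ζ ^ a
        + (p ^ n : K)⁻¹ * ∑ k ∈ Finset.Icc 1 (p ^ n - 1), (k : K) * (ζ ^ p) ^ k :=
  stmt_17_general p n hp ζ hζ
end
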